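/- arXiv:1902.10926 — 14 statements merged into one kernel-verified Lean document; each statement's English description precedes it below -/
import Mathlib

section
/- Let ε ∈ {−1, 1}, let L > 0, let k : ℝ → ℝ be continuous, and let E₁, E₂ : ℝ → ℝ² be continuously differentiable maps satisfying E₁' = −(1/2)k·E₁ + E₂ and E₂' = −ε·E₁ − k·E₂, such that det(E₁(t), E₂(t)) ≠ 0 for all t and such that k, E₁, E₂ are all L-periodic. Then ∫₀ᴸ k(t) dt = 0; moreover there exist t₁, t₂ ∈ [0, L) with t₁ ≠ t₂ and k(t₁) = k(t₂) = 0. -/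
/-!
The Wronskian-type determinant `D = det(E₁, E₂)` solves the scalar linear equation
`D' = -(3/2) k D`, so `D(L) = D(0) · exp(-(3/2) ∫₀ᴸ k)`. Periodicity and `D(0) ≠ 0` force
`∫₀ᴸ k = 0`. A continuous function with vanishing integral over an interval has a zero inside it
(Rolle applied to a primitive); applying this on `[0, L]` and then on `[t₀, t₀ + L]` for the first
zero `t₀`, and reducing modulo `L`, yields two distinct zeros in `[0, L)`.
-/

open Set

def planeDet (u v : Fin 2 → ℝ) : ℝ := u 0 * v 1 - u 1 * v 0

theorem HasDerivAt.planeDet {u v : ℝ → Fin 2 → ℝ} {u' v' : Fin 2 → ℝ} {t : ℝ}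
    (hu : HasDerivAt u u' t) (hv : HasDerivAt v v' t) :
    HasDerivAt (fun s => _root_.planeDet (u s) (v s))
      (_root_.planeDet u' (v t) + _root_.planeDet (u t) v') t := by
  have hu_i (i : Fin 2) := hasDerivAt_pi.1 hu i
  have hv_i (i : Fin 2) := hasDerivAt_pi.1 hv i
  exact (((hu_i 0).mul (hv_i 1)).sub ((hu_i 1).mul (hv_i 0))).congr_deriv
    (by simp only [_root_.planeDet]; ring)

theorem hasDerivAt_planeDet_of_frame {E₁ E₂ : ℝ → Fin 2 → ℝ} (ε κ t : ℝ)
    (h₁ : HasDerivAt E₁ ((-(1/2) * κ) • E₁ t + E₂ t) t)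
    (h₂ : HasDerivAt E₂ ((-ε) • E₁ t - κ • E₂ t) t) :
    HasDerivAt (fun s => planeDet (E₁ s) (E₂ s)) (-(3/2) * κ * planeDet (E₁ t) (E₂ t)) t :=
  (h₁.planeDet h₂).congr_deriv <| by
    simp only [planeDet, Pi.add_apply, Pi.sub_apply, Pi.smul_apply, smul_eq_mul]; ring

theorem eq_mul_exp_integral_of_hasDerivAt {D c : ℝ → ℝ} (hc : Continuous c)
    (hD : ∀ t, HasDerivAt D (c t * D t) t) (a b : ℝ) :
    D b = D a * Real.exp (∫ t in a..b, c t) := by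
  set g : ℝ → ℝ := fun t => D t * Real.exp (-∫ s in a..t, c s)
  have hg (t : ℝ) : HasDerivAt g 0 t :=
    ((hD t).mul (hc.integral_hasStrictDerivAt a t).hasDerivAt.neg.exp).congr_deriv (by ring)
  have hgba : g b = g a :=
    is_const_of_deriv_eq_zero (fun t => (hg t).differentiableAt) (fun t => (hg t).deriv) b a
  calc D b = g b * Real.exp (∫ t in a..b, c t) := by
        rw [mul_assoc, ← Real.exp_add, neg_add_cancel, Real.exp_zero, mul_one]
    _ = D a * Real.exp (∫ t in a..b, c t) := by simp [hgba, g]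

theorem exists_mem_Ioo_eq_zero_of_integral_eq_zero {f : ℝ → ℝ} {a b : ℝ} (hab : a < b)
    (hf : ContinuousOn f (Icc a b)) (h : ∫ t in a..b, f t = 0) : ∃ c ∈ Ioo a b, f c = 0 := by
  have hF : ContinuousOn (fun x => ∫ t in a..x, f t) (Icc a b) := by
    rw [← uIcc_of_le hab.le] at hf ⊢
    exact intervalIntegral.continuousOn_primitive_interval' hf.intervalIntegrable left_mem_uIcc
  refine exists_hasDerivAt_eq_zero hab hF (by simp [h]) fun x hx => ?_
  exact intervalIntegral.integral_hasDerivAt_right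
    ((hf.mono (Icc_subset_Icc_right hx.2.le)).intervalIntegrable_of_Icc hx.1.le)
    ((hf.mono Ioo_subset_Icc_self).stronglyMeasurableAtFilter isOpen_Ioo x hx)
    (hf.continuousAt (Icc_mem_nhds hx.1 hx.2))

theorem Function.Periodic.exists_two_zeros_of_integral_eq_zero {f : ℝ → ℝ} {L : ℝ}
    (hf : Continuous f) (hp : Function.Periodic f L) (hL : 0 < L) (h : ∫ t in 0..L, f t = 0) :
    ∃ t₁ t₂ : ℝ, t₁ ∈ Ico 0 L ∧ t₂ ∈ Ico 0 L ∧ t₁ ≠ t₂ ∧ f t₁ = 0 ∧ f t₂ = 0 := by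
  obtain ⟨t₀, ht₀, hft₀⟩ := exists_mem_Ioo_eq_zero_of_integral_eq_zero hL hf.continuousOn h
  have h' : ∫ t in t₀..t₀ + L, f t = 0 := by rw [hp.intervalIntegral_add_eq t₀ 0, zero_add, h]
  obtain ⟨t₁, ht₁, hft₁⟩ :=
    exists_mem_Ioo_eq_zero_of_integral_eq_zero (lt_add_of_pos_right t₀ hL) hf.continuousOn h'
  rcases lt_or_ge t₁ L with ht₁L | ht₁L
  · exact ⟨t₀, t₁, Ioo_subset_Ico_self ht₀, ⟨by linarith [ht₀.1, ht₁.1], ht₁L⟩, ht₁.1.ne,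
      hft₀, hft₁⟩
  · exact ⟨t₀, t₁ - L, Ioo_subset_Ico_self ht₀, ⟨by linarith, by linarith [ht₀.2, ht₁.2]⟩,
      (by linarith [ht₁.2] : t₁ - L < t₀).ne', hft₀, by rwa [hp.sub_eq]⟩

theorem stmt_2_general (ε : ℝ) (L : ℝ) (hL : 0 < L)
    (k : ℝ → ℝ) (hk : Continuous k)
    (E₁ E₂ : ℝ → Fin 2 → ℝ) (hE₁ : ContDiff ℝ 1 E₁) (hE₂ : ContDiff ℝ 1 E₂)
    (hE₁' : ∀ t, deriv E₁ t = (-(1/2) * k t) • E₁ t + E₂ t)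
    (hE₂' : ∀ t, deriv E₂ t = (-ε) • E₁ t - k t • E₂ t)
    (hdet : ∀ t, E₁ t 0 * E₂ t 1 - E₁ t 1 * E₂ t 0 ≠ 0)
    (hkp : Function.Periodic k L)
    (hE₁p : Function.Periodic E₁ L) (hE₂p : Function.Periodic E₂ L) :
    (∫ t in (0:ℝ)..L, k t) = 0 ∧
    ∃ t₁ t₂ : ℝ, t₁ ∈ Set.Ico (0:ℝ) L ∧ t₂ ∈ Set.Ico (0:ℝ) L ∧ t₁ ≠ t₂ ∧
      k t₁ = 0 ∧ k t₂ = 0 := by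
  have hD (t : ℝ) : HasDerivAt (fun s => planeDet (E₁ s) (E₂ s))
      (-(3/2) * k t * planeDet (E₁ t) (E₂ t)) t :=
    hasDerivAt_planeDet_of_frame ε (k t) t
      (by rw [← hE₁' t]; exact (hE₁.differentiable one_ne_zero t).hasDerivAt)
      (by rw [← hE₂' t]; exact (hE₂.differentiable one_ne_zero t).hasDerivAt)
  have hD₀ : planeDet (E₁ 0) (E₂ 0) ≠ 0 := hdet 0
  have hsol := eq_mul_exp_integral_of_hasDerivAt (hk.const_mul (-(3/2))) hD 0 L
  rw [hE₁p.eq, hE₂p.eq, eq_comm, mul_eq_left₀ hD₀, Real.exp_eq_one_iff,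
    intervalIntegral.integral_const_mul, mul_eq_zero] at hsol
  have htotal : ∫ t in (0:ℝ)..L, k t = 0 := hsol.resolve_left (by norm_num)
  exact ⟨htotal, hkp.exists_two_zeros_of_integral_eq_zero hk hL htotal⟩

/-- A closed nondegenerate plane curve without affine inflection point has
vanishing total general-affine curvature, hence at least two zeros of `k`
in a period. -/
theorem stmt_2 (ε : ℝ) (hε : ε = 1 ∨ ε = -1) (L : ℝ) (hL : 0 < L)
    (k : ℝ → ℝ) (hk : Continuous k)
    (E₁ E₂ : ℝ → Fin 2 → ℝ) (hE₁ : ContDiff ℝ 1 E₁) (hE₂ : ContDiff ℝ 1 E₂)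
    (hE₁' : ∀ t, deriv E₁ t = (-(1/2) * k t) • E₁ t + E₂ t)
    (hE₂' : ∀ t, deriv E₂ t = (-ε) • E₁ t - k t • E₂ t)
    (hdet : ∀ t, E₁ t 0 * E₂ t 1 - E₁ t 1 * E₂ t 0 ≠ 0)
    (hkp : Function.Periodic k L)
    (hE₁p : Function.Periodic E₁ L) (hE₂p : Function.Periodic E₂ L) :
    (∫ t in (0:ℝ)..L, k t) = 0 ∧
    ∃ t₁ t₂ : ℝ, t₁ ∈ Set.Ico (0:ℝ) L ∧ t₂ ∈ Set.Ico (0:ℝ) L ∧ t₁ ≠ t₂ ∧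
      k t₁ = 0 ∧ k t₂ = 0 :=
  stmt_2_general ε L hL k hk E₁ E₂ hE₁ hE₂ hE₁' hE₂' hdet hkp hE₁p hE₂p
end

section
/- Let y : ℝ → ℝ² be smooth, let σ : ℝ → ℝ be smooth with σ'(t) > 0 for all t, set x := y ∘ σ, and suppose x''' = a·x'' + b·x' for smooth functions a, b : ℝ → ℝ. Define A := (a − 3σ''/σ')·(1/σ') and B := (b + a·σ''/σ' − σ'''/σ')·(1/σ'²). Then: (i) for all t, y'''(σ(t)) = A(t)·y''(σ(t)) + B(t)·y'(σ(t)); and (ii) the covariance relation B + (2/9)A² − (1/3)·A'/σ' = (b + (2/9)a² − (1/3)a')·(1/σ'²) holds identically. -/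
/-- Change-of-parameter formulas for the third order ODE of a plane curve and
the covariance relation `B + (2/9)A² − (1/3)Ȧ = (b + (2/9)a² − (1/3)a')/σ'²`. -/
theorem stmt_3 (y : ℝ → Fin 2 → ℝ) (σ a b : ℝ → ℝ)
    (hy : ContDiff ℝ (⊤ : ℕ∞) y) (hσ : ContDiff ℝ (⊤ : ℕ∞) σ) (hσ' : ∀ t, 0 < deriv σ t)
    (ha : ContDiff ℝ (⊤ : ℕ∞) a) (hb : ContDiff ℝ (⊤ : ℕ∞) b)
    (hode : ∀ t, iteratedDeriv 3 (y ∘ σ) t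
      = a t • iteratedDeriv 2 (y ∘ σ) t + b t • deriv (y ∘ σ) t)
    (A B : ℝ → ℝ)
    (hA : ∀ t, A t = (a t - 3 * iteratedDeriv 2 σ t / deriv σ t) * (1 / deriv σ t))
    (hB : ∀ t, B t = (b t + a t * iteratedDeriv 2 σ t / deriv σ t
      - iteratedDeriv 3 σ t / deriv σ t) * (1 / (deriv σ t)^2)) :
    (∀ t, iteratedDeriv 3 y (σ t)
      = A t • iteratedDeriv 2 y (σ t) + B t • deriv y (σ t)) ∧
    (∀ t, B t + (2/9) * (A t)^2 - (1/3) * deriv A t / deriv σ t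
      = (b t + (2/9) * (a t)^2 - (1/3) * deriv a t) * (1 / (deriv σ t)^2)) := by
  have hy' : ContDiff ℝ (⊤ : ℕ∞) y := hy.of_le (by simp)
  have hss : ContDiff ℝ (⊤ : ℕ∞) σ := hσ.of_le (by simp)
  have haa : ContDiff ℝ (⊤ : ℕ∞) a := ha.of_le (by simp)
  have hyd : ∀ n : ℕ, ContDiff ℝ (⊤ : ℕ∞) (iteratedDeriv n y) := by
    intro n; rw [iteratedDeriv_eq_iterate]; exact hy'.iterate_deriv n
  have hσd : ∀ n : ℕ, ContDiff ℝ (⊤ : ℕ∞) (iteratedDeriv n σ) := by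
    intro n; rw [iteratedDeriv_eq_iterate]; exact hss.iterate_deriv n
  have hY1 : ∀ u, HasDerivAt y (deriv y u) u := fun u =>
    (hy'.differentiable (by simp) u).hasDerivAt
  have hY2 : ∀ u, HasDerivAt (deriv y) (iteratedDeriv 2 y u) u := by
    intro u
    have h1 := (((hyd 1).differentiable (by simp)) u).hasDerivAt
    rw [iteratedDeriv_one] at h1
    rw [show iteratedDeriv 2 y = deriv (deriv y) by
      rw [iteratedDeriv_succ, iteratedDeriv_one]]
    exact h1
  have hY3 : ∀ u, HasDerivAt (iteratedDeriv 2 y) (iteratedDeriv 3 y u) u := by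
    intro u
    have h1 := (((hyd 2).differentiable (by simp)) u).hasDerivAt
    rw [show iteratedDeriv 3 y = deriv (iteratedDeriv 2 y) from iteratedDeriv_succ]
    exact h1
  have hS1 : ∀ u, HasDerivAt σ (deriv σ u) u := fun u =>
    (hss.differentiable (by simp) u).hasDerivAt
  have hS2 : ∀ u, HasDerivAt (deriv σ) (iteratedDeriv 2 σ u) u := by
    intro u
    have h1 := (((hσd 1).differentiable (by simp)) u).hasDerivAt
    rw [iteratedDeriv_one] at h1
    rw [show iteratedDeriv 2 σ = deriv (deriv σ) by
      rw [iteratedDeriv_succ, iteratedDeriv_one]]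
    exact h1
  have hS3 : ∀ u, HasDerivAt (iteratedDeriv 2 σ) (iteratedDeriv 3 σ u) u := by
    intro u
    have h1 := (((hσd 2).differentiable (by simp)) u).hasDerivAt
    rw [show iteratedDeriv 3 σ = deriv (iteratedDeriv 2 σ) from iteratedDeriv_succ]
    exact h1
  have hAder : ∀ u, HasDerivAt a (deriv a u) u := fun u =>
    (haa.differentiable (by simp) u).hasDerivAt
  -- first derivative of the composition
  have hD1 : ∀ t, HasDerivAt (y ∘ σ) (deriv σ t • deriv y (σ t)) t := fun t =>
    (hY1 (σ t)).scomp t (hS1 t)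
  have hd1 : ∀ t, deriv (y ∘ σ) t = deriv σ t • deriv y (σ t) := fun t => (hD1 t).deriv
  -- second derivative
  have hD2 : ∀ t, HasDerivAt (deriv (y ∘ σ))
      (iteratedDeriv 2 σ t • deriv y (σ t)
        + (deriv σ t)^2 • iteratedDeriv 2 y (σ t)) t := by
    intro t
    have h1 : HasDerivAt (fun u => deriv σ u • deriv y (σ u))
        (deriv σ t • (deriv σ t • iteratedDeriv 2 y (σ t))
          + iteratedDeriv 2 σ t • deriv y (σ t)) t :=
      (hS2 t).smul ((hY2 (σ t)).scomp t (hS1 t))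
    rw [show deriv (y ∘ σ) = fun u => deriv σ u • deriv y (σ u) from funext hd1]
    convert h1 using 1
    module
  have hd2 : ∀ t, iteratedDeriv 2 (y ∘ σ) t
      = iteratedDeriv 2 σ t • deriv y (σ t)
        + (deriv σ t)^2 • iteratedDeriv 2 y (σ t) := by
    intro t
    rw [show iteratedDeriv 2 (y ∘ σ) = deriv (deriv (y ∘ σ)) by
      rw [iteratedDeriv_succ, iteratedDeriv_one]]
    exact (hD2 t).deriv
  -- third derivative
  have hd3 : ∀ t, iteratedDeriv 3 (y ∘ σ) t
      = iteratedDeriv 3 σ t • deriv y (σ t)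
        + (3 * (deriv σ t * iteratedDeriv 2 σ t)) • iteratedDeriv 2 y (σ t)
        + (deriv σ t)^3 • iteratedDeriv 3 y (σ t) := by
    intro t
    have h1 : HasDerivAt (fun u => iteratedDeriv 2 σ u • deriv y (σ u)
        + (deriv σ u)^2 • iteratedDeriv 2 y (σ u))
        ((iteratedDeriv 2 σ t • (deriv σ t • iteratedDeriv 2 y (σ t))
          + iteratedDeriv 3 σ t • deriv y (σ t))
        + ((deriv σ t)^2 • (deriv σ t • iteratedDeriv 3 y (σ t))
          + ((2 : ℕ) * deriv σ t ^ (2 - 1) * iteratedDeriv 2 σ t)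
            • iteratedDeriv 2 y (σ t))) t :=
      HasDerivAt.add
        ((hS3 t).smul ((hY2 (σ t)).scomp t (hS1 t)))
        (((hS2 t).pow 2).smul ((hY3 (σ t)).scomp t (hS1 t)))
    rw [show iteratedDeriv 3 (y ∘ σ) = deriv (iteratedDeriv 2 (y ∘ σ)) from
        iteratedDeriv_succ,
      show iteratedDeriv 2 (y ∘ σ) = fun u => iteratedDeriv 2 σ u • deriv y (σ u)
        + (deriv σ u)^2 • iteratedDeriv 2 y (σ u) from funext hd2, h1.deriv]
    push_cast
    module
  constructor
  · intro t
    have hne : deriv σ t ≠ 0 := (hσ' t).ne'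
    have e := hode t
    rw [hd1 t, hd2 t, hd3 t] at e
    have hA3 : (deriv σ t)^3 * A t
        = a t * (deriv σ t)^2 - 3 * (deriv σ t * iteratedDeriv 2 σ t) := by
      rw [hA]; field_simp
    have hB3 : (deriv σ t)^3 * B t
        = a t * iteratedDeriv 2 σ t + b t * deriv σ t - iteratedDeriv 3 σ t := by
      rw [hB]; field_simp; ring
    have key : (deriv σ t)^3 • iteratedDeriv 3 y (σ t)
        = (deriv σ t)^3 • (A t • iteratedDeriv 2 y (σ t) + B t • deriv y (σ t)) := by
      linear_combination (norm := module) e - hA3 • iteratedDeriv 2 y (σ t)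
        - hB3 • deriv y (σ t)
    exact smul_right_injective (Fin 2 → ℝ) (pow_ne_zero 3 hne) key
  · intro t
    have hne : ∀ u, deriv σ u ≠ 0 := fun u => (hσ' u).ne'
    have hAt : HasDerivAt A
        ((deriv a t - (3 * iteratedDeriv 3 σ t * deriv σ t
            - 3 * iteratedDeriv 2 σ t * iteratedDeriv 2 σ t) / (deriv σ t)^2)
          * (1 / deriv σ t)
        + (a t - 3 * iteratedDeriv 2 σ t / deriv σ t)
          * ((0 * deriv σ t - 1 * iteratedDeriv 2 σ t) / (deriv σ t)^2)) t := by
      rw [show A = fun u => (a u - 3 * iteratedDeriv 2 σ u / deriv σ u)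
          * (1 / deriv σ u) from funext hA]
      exact ((hAder t).sub (((hS3 t).const_mul 3).div (hS2 t) (hne t))).mul
        ((hasDerivAt_const t (1:ℝ)).div (hS2 t) (hne t))
    rw [hAt.deriv, hB t, hA t]
    have h1 := hne t
    field_simp
    ring
end

section
/- Let I ⊆ ℝ be an open interval and let f : I → ℝ be smooth with f''(t) > 0 for all t ∈ I. Suppose the function μ := (f'')^{−2/3} satisfies μ'' ≡ c on I for some constant c ∈ ℝ. Then the graph of f lies on a conic: there exist real numbers A, B, C, D, E, F, not all zero, such that A·t² + B·t·f(t) + C·f(t)² + D·t + E·f(t) + F = 0 for all t ∈ I. -/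
lemma aux_anti {I : Set ℝ} (hI : Convex ℝ I) {u v d : ℝ → ℝ}
    (hu : ∀ t ∈ I, HasDerivAt u (d t) t) (hv : ∀ t ∈ I, HasDerivAt v (d t) t)
    {t₀ : ℝ} (h₀ : t₀ ∈ I) : ∀ t ∈ I, u t = v t + (u t₀ - v t₀) := by
  intro t ht
  have h := hI.norm_image_sub_le_of_norm_hasDerivWithin_le
    (f := fun y => u y - v y) (f' := fun _ => (0:ℝ)) (C := 0)
    (fun x hx => by simpa using ((hu x hx).fun_sub (hv x hx)).hasDerivWithinAt)
    (fun x hx => by simp) h₀ ht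
  have h0 : ‖(u t - v t) - (u t₀ - v t₀)‖ = 0 :=
    le_antisymm (by simpa using h) (norm_nonneg _)
  have := norm_eq_zero.mp h0
  linarith [sub_eq_zero.mp this]

lemma aux_rpow {u : ℝ} (hu : 0 < u) : (u^2 : ℝ) ^ (-(3:ℝ)/2) = (u^3)⁻¹ := by
  rw [← Real.rpow_natCast u 2, ← Real.rpow_mul hu.le]
  rw [show ((2:ℕ):ℝ) * (-(3:ℝ)/2) = -(3:ℝ) by norm_num]
  rw [Real.rpow_neg hu.le]
  rw [show (3:ℝ) = ((3:ℕ):ℝ) by norm_num, Real.rpow_natCast]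

/-- A graph immersion whose equiaffine curvature is constant (i.e. `μ'' ≡ c`
for `μ = (f'')^(-2/3)`) lies on a conic. -/
theorem stmt_5 (I : Set ℝ) (hIopen : IsOpen I) (hIconn : I.OrdConnected)
    (f : ℝ → ℝ) (hf : ContDiffOn ℝ (⊤ : ℕ∞) f I)
    (hf'' : ∀ t ∈ I, 0 < iteratedDeriv 2 f t)
    (μ : ℝ → ℝ) (hμ : ∀ t, μ t = (iteratedDeriv 2 f t) ^ (-(2:ℝ)/3))
    (c : ℝ) (hc : ∀ t ∈ I, iteratedDeriv 2 μ t = c) :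
    ∃ A B C D E F : ℝ, ¬(A = 0 ∧ B = 0 ∧ C = 0 ∧ D = 0 ∧ E = 0 ∧ F = 0) ∧
      ∀ t ∈ I, A * t^2 + B * t * f t + C * (f t)^2 + D * t + E * f t + F = 0 := by
  have hconv : Convex ℝ I := hIconn.convex
  rcases Set.eq_empty_or_nonempty I with hIe | ⟨t₀, h₀⟩
  · exact ⟨1, 0, 0, 0, 0, 0, by simp, fun t ht => absurd ht (by simp [hIe])⟩
  have hit2 : ∀ g : ℝ → ℝ, iteratedDeriv 2 g = deriv (deriv g) := by
    intro g; rw [iteratedDeriv_succ, iteratedDeriv_one]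
  set f1 := deriv f with hf1def
  set f2 := deriv f1 with hf2def
  have hf2eq : iteratedDeriv 2 f = f2 := hit2 f
  rw [hf2eq] at hf'' hμ
  have hderiv_smooth : ∀ g : ℝ → ℝ, ContDiffOn ℝ (⊤ : ℕ∞) g I → ContDiffOn ℝ (⊤ : ℕ∞) (deriv g) I :=
    fun g hg => hg.deriv_of_isOpen hIopen (by simp)
  have hf1s : ContDiffOn ℝ (⊤ : ℕ∞) f1 I := hderiv_smooth f hf
  have hf2s : ContDiffOn ℝ (⊤ : ℕ∞) f2 I := hderiv_smooth f1 hf1s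
  have hder : ∀ g : ℝ → ℝ, ContDiffOn ℝ (⊤ : ℕ∞) g I → ∀ t ∈ I, HasDerivAt g (deriv g t) t :=
    fun g hg t ht =>
      ((hg.differentiableOn (by simp)).differentiableAt (hIopen.mem_nhds ht)).hasDerivAt
  have hfd : ∀ t ∈ I, HasDerivAt f (f1 t) t := hder f hf
  have hf1d : ∀ t ∈ I, HasDerivAt f1 (f2 t) t := hder f1 hf1s
  have hμs : ContDiffOn ℝ (⊤ : ℕ∞) μ I := by
    intro t ht
    apply ContDiffAt.contDiffWithinAt
    have h1 : ContDiffAt ℝ (⊤ : ℕ∞) f2 t := hf2s.contDiffAt (hIopen.mem_nhds ht)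
    have h2 : ContDiffAt ℝ (⊤ : ℕ∞) (fun x : ℝ => x ^ (-(2:ℝ)/3)) (f2 t) :=
      Real.contDiffAt_rpow_const_of_ne (ne_of_gt (hf'' t ht))
    have h3 := h2.comp t h1
    have hfun : μ = (fun x : ℝ => x ^ (-(2:ℝ)/3)) ∘ f2 := funext fun t => hμ t
    rwa [hfun]
  have hμ1 : ∀ t ∈ I, HasDerivAt (deriv μ) c t := by
    intro t ht
    have h := hder (deriv μ) (hderiv_smooth μ hμs) t ht
    rwa [show deriv (deriv μ) t = c from by rw [← hit2 μ]; exact hc t ht] at h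
  obtain ⟨bb, hbb⟩ : ∃ bb, ∀ t ∈ I, deriv μ t = c * t + bb := by
    refine ⟨deriv μ t₀ - c * t₀, ?_⟩
    have hv : ∀ t ∈ I, HasDerivAt (fun t => c * t) c t := fun t ht => by
      simpa using (hasDerivAt_id t).const_mul c
    have h := aux_anti hconv (d := fun _ => c) hμ1 hv h₀
    intro t ht
    have h' := h t ht
    linarith
  obtain ⟨aa, haa⟩ : ∃ aa, ∀ t ∈ I, μ t = c/2 * t^2 + bb * t + aa := by
    refine ⟨μ t₀ - (c/2 * t₀^2 + bb * t₀), ?_⟩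
    have hu : ∀ t ∈ I, HasDerivAt μ (c * t + bb) t := fun t ht => by
      have h := hder μ hμs t ht; rwa [hbb t ht] at h
    have hv : ∀ t ∈ I, HasDerivAt (fun t => c/2 * t^2 + bb * t) (c * t + bb) t := by
      intro t ht
      have h1 : HasDerivAt (fun t : ℝ => c/2 * t^2) (c/2 * (↑2 * t^1)) t :=
        (hasDerivAt_pow 2 t).const_mul (c/2)
      have h2 : HasDerivAt (fun t : ℝ => bb * t) (bb * 1) t := (hasDerivAt_id t).const_mul bb
      have h3 := h1.fun_add h2
      refine h3.congr_deriv (Eq.symm ?_)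
      push_cast; ring
    have h := aux_anti hconv (d := fun t => c * t + bb) hu hv h₀
    intro t ht
    have h' := h t ht
    linarith
  set Q : ℝ → ℝ := fun t => c/2 * t^2 + bb * t + aa with hQdef
  have hQpos : ∀ t ∈ I, 0 < Q t := fun t ht => by
    simp only [hQdef]
    rw [← haa t ht, hμ t]
    exact Real.rpow_pos_of_pos (hf'' t ht) _
  have hf2Q : ∀ t ∈ I, f2 t = Q t ^ (-(3:ℝ)/2) := by
    intro t ht
    have h1 : Q t = f2 t ^ (-(2:ℝ)/3) := by
      simp only [hQdef]; rw [← haa t ht, hμ t]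
    rw [h1, ← Real.rpow_mul (hf'' t ht).le]
    norm_num
  have hQd : ∀ t : ℝ, HasDerivAt Q (c * t + bb) t := by
    intro t
    have h1 : HasDerivAt (fun t : ℝ => c/2 * t^2) (c/2 * (↑2 * t^1)) t :=
      (hasDerivAt_pow 2 t).const_mul (c/2)
    have h2 : HasDerivAt (fun t : ℝ => bb * t) (bb * 1) t := (hasDerivAt_id t).const_mul bb
    have h3 := (h1.add h2).add_const aa
    have he : c * t + bb = c/2 * (↑2 * t^1) + bb * 1 := by push_cast; ring
    rw [hQdef, he]
    exact h3
  set D0 := 2*aa*c - bb^2 with hD0def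
  have hQident : ∀ t : ℝ, 2*c*Q t - (c*t+bb)^2 = D0 := fun t => by
    simp only [hQdef, hD0def]; ring
  rcases eq_or_ne D0 0 with hD0 | hD0
  · rcases eq_or_ne c 0 with hc0 | hc0
    · -- c = 0 forces bb = 0 : parabola
      have hbb0 : bb = 0 := by
        simp only [hD0def, hc0] at hD0
        have hsq : bb^2 = 0 := by linarith
        exact pow_eq_zero_iff two_ne_zero |>.mp hsq
      have hapos : 0 < aa := by
        have h := hQpos t₀ h₀
        simp only [hQdef, hc0, hbb0] at h
        linarith
      set m := aa ^ (-(3:ℝ)/2) with hmdef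
      have hf2m : ∀ t ∈ I, f2 t = m := by
        intro t ht
        rw [hf2Q t ht]
        simp only [hQdef, hc0, hbb0]
        norm_num
        rw [hmdef]
        congr 1
        norm_num
      have hg : ∀ t ∈ I, HasDerivAt (fun t => m * t) (f2 t) t := fun t ht => by
        rw [hf2m t ht]; simpa using (hasDerivAt_id t).const_mul m
      have h1 := aux_anti hconv (d := f2) hf1d hg h₀
      set k1 := f1 t₀ - m * t₀ with hk1
      set G : ℝ → ℝ := fun t => m/2 * t^2 + k1 * t with hGdef
      have hG : ∀ t ∈ I, HasDerivAt G (f1 t) t := by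
        intro t ht
        have ha2 : HasDerivAt (fun t : ℝ => m/2 * t^2) (m/2 * (↑2 * t^1)) t :=
          (hasDerivAt_pow 2 t).const_mul (m/2)
        have hb2 : HasDerivAt (fun t : ℝ => k1 * t) (k1 * 1) t := (hasDerivAt_id t).const_mul k1
        have h3 := ha2.fun_add hb2
        rw [h1 t ht]
        refine h3.congr_deriv (Eq.symm ?_)
        ring
      have h0' := aux_anti hconv (d := f1) hfd hG h₀
      set k0 := f t₀ - G t₀ with hk0
      refine ⟨m/2, 0, 0, k1, -1, k0, ?_, ?_⟩
      · rintro ⟨-, -, -, -, h, -⟩; norm_num at h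
      · intro t ht
        have hft := h0' t ht
        simp only [hGdef] at hft
        linear_combination -hft
    · -- c ≠ 0 : hyperbola
      set s := bb / c with hsdef
      have h2ac : 2*aa*c = bb^2 := by
        simp only [hD0def] at hD0; linarith
      have hQfac : ∀ t : ℝ, Q t = c/2 * (t+s)^2 := by
        intro t
        simp only [hQdef, hsdef]
        field_simp
        linear_combination h2ac
      have hw : ∀ t ∈ I, t + s ≠ 0 := by
        intro t ht h
        have hq := hQpos t ht
        rw [hQfac t, h] at hq
        norm_num at hq
      have hcpos : 0 < c := by
        have h := hQpos t₀ h₀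
        rw [hQfac t₀] at h
        nlinarith [sq_nonneg (t₀ + s)]
      have hc2 : (0:ℝ) < c/2 := by linarith
      have hsign : (∀ t ∈ I, 0 < t + s) ∨ (∀ t ∈ I, t + s < 0) := by
        rcases lt_or_gt_of_ne (hw t₀ h₀) with hneg | hpos
        · right; intro t ht
          rcases lt_or_gt_of_ne (hw t ht) with h | h
          · exact h
          · exfalso
            have hm : -s ∈ Set.Icc t₀ t := ⟨by linarith, by linarith⟩
            have hmem := hIconn.out h₀ ht hm
            exact hw _ hmem (by ring)
        · left; intro t ht
          rcases lt_or_gt_of_ne (hw t ht) with h | h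
          · exfalso
            have hm : -s ∈ Set.Icc t t₀ := ⟨by linarith, by linarith⟩
            have hmem := hIconn.out ht h₀ hm
            exact hw _ hmem (by ring)
          · exact h
      obtain ⟨m, hm0, hf2w⟩ : ∃ m : ℝ, m ≠ 0 ∧ ∀ t ∈ I, f2 t = m * ((t+s)^3)⁻¹ := by
        rcases hsign with hp | hn
        · refine ⟨(c/2) ^ (-(3:ℝ)/2), (Real.rpow_pos_of_pos hc2 _).ne', ?_⟩
          intro t ht
          have hu : 0 < t + s := hp t ht
          rw [hf2Q t ht, hQfac t, Real.mul_rpow hc2.le (sq_nonneg _), aux_rpow hu]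
        · refine ⟨-((c/2) ^ (-(3:ℝ)/2)),
            neg_ne_zero.mpr (Real.rpow_pos_of_pos hc2 _).ne', ?_⟩
          intro t ht
          have hu : 0 < -(t + s) := by have := hn t ht; linarith
          rw [hf2Q t ht, hQfac t, Real.mul_rpow hc2.le (sq_nonneg _)]
          rw [show (t+s)^2 = (-(t+s))^2 by ring, aux_rpow hu]
          rw [show (-(t+s))^3 = -((t+s)^3) by ring, inv_neg]
          ring
      set g : ℝ → ℝ := fun t => -(m/2) * ((t+s)^2)⁻¹ with hgdef
      have hg : ∀ t ∈ I, HasDerivAt g (f2 t) t := by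
        intro t ht
        have hu := hw t ht
        have hd1 := ((hasDerivAt_id t).add_const s).fun_pow 2
        have hd2 := (hd1.inv (pow_ne_zero 2 hu)).const_mul (-(m/2))
        rw [hf2w t ht]
        refine hd2.congr_deriv (Eq.symm ?_)
        simp only [id_eq]
        field_simp
        ring
      have h1 := aux_anti hconv (d := f2) hf1d hg h₀
      set k1 := f1 t₀ - g t₀ with hk1
      set G : ℝ → ℝ := fun t => m/2 * (t+s)⁻¹ + k1 * t with hGdef
      have hG : ∀ t ∈ I, HasDerivAt G (f1 t) t := by
        intro t ht
        have hu := hw t ht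
        have hd1 := (((hasDerivAt_id t).add_const s).inv hu).const_mul (m/2)
        have hd2 := hd1.fun_add ((hasDerivAt_id t).const_mul k1)
        rw [h1 t ht]
        refine hd2.congr_deriv (Eq.symm ?_)
        simp only [id_eq]
        simp only [hgdef]
        field_simp
      have h0' := aux_anti hconv (d := f1) hfd hG h₀
      set k0 := f t₀ - G t₀ with hk0
      have key : ∀ t ∈ I, (f t - k1*t - k0) * (t+s) = m/2 := by
        intro t ht
        have hu := hw t ht
        have hft := h0' t ht
        simp only [hGdef] at hft
        have hstep : f t - k1*t - k0 = m/2 * (t+s)⁻¹ := by linarith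
        rw [hstep]
        field_simp
      refine ⟨-k1, 1, 0, -(k1*s) - k0, s, -(k0*s) - m/2, ?_, ?_⟩
      · rintro ⟨-, h, -⟩; exact one_ne_zero h
      · intro t ht
        linear_combination key t ht
  -- Case D0 ≠ 0 : ellipse/hyperbola
  · set g : ℝ → ℝ := fun t => 2*(c*t+bb) * Q t ^ (-(1:ℝ)/2) / D0 with hgdef
    have hg : ∀ t ∈ I, HasDerivAt g (f2 t) t := by
      intro t ht
      have hx := hQpos t ht
      have h1 : HasDerivAt (fun t => Q t ^ (-(1:ℝ)/2))
          ((c*t+bb) * (-(1:ℝ)/2) * Q t ^ ((-(1:ℝ)/2) - 1)) t :=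
        (hQd t).rpow_const (Or.inl hx.ne')
      have h2 : HasDerivAt (fun t : ℝ => 2*(c*t+bb)) (2*c) t := by
        have := (((hasDerivAt_id t).const_mul c).add_const bb).const_mul 2
        simpa using this
      have h3 := (h2.fun_mul h1).div_const D0
      rw [hf2Q t ht]
      refine h3.congr_deriv (Eq.symm ?_)
      rw [show ((-(1:ℝ)/2) - 1) = -(3:ℝ)/2 by norm_num]
      have hhalf : Q t ^ (-(1:ℝ)/2) = Q t * Q t ^ (-(3:ℝ)/2) := by
        rw [show (-(1:ℝ)/2) = 1 + (-(3:ℝ)/2) by norm_num, Real.rpow_add hx, Real.rpow_one]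
      rw [hhalf]
      have hid := hQident t
      field_simp
      linear_combination Q t ^ (-(3:ℝ)/2) * hid
    have h1 := aux_anti hconv (d := f2) hf1d hg h₀
    set k1 := f1 t₀ - g t₀ with hk1def
    set G : ℝ → ℝ := fun t => 4 * Q t ^ ((1:ℝ)/2) / D0 + k1 * t with hGdef
    have hG : ∀ t ∈ I, HasDerivAt G (f1 t) t := by
      intro t ht
      have hx := hQpos t ht
      have h1' : HasDerivAt (fun t => Q t ^ ((1:ℝ)/2))
          ((c*t+bb) * ((1:ℝ)/2) * Q t ^ ((1:ℝ)/2 - 1)) t :=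
        (hQd t).rpow_const (Or.inl hx.ne')
      have h2 := ((h1'.const_mul 4).div_const D0).fun_add ((hasDerivAt_id t).const_mul k1)
      rw [h1 t ht]
      refine h2.congr_deriv (Eq.symm ?_)
      rw [show ((1:ℝ)/2 - 1) = -(1:ℝ)/2 by norm_num]
      simp only [hgdef]; ring
    have h0' := aux_anti hconv (d := f1) hfd hG h₀
    set k0 := f t₀ - G t₀ with hk0def
    have key : ∀ t ∈ I, (f t - k1*t - k0)^2 * D0^2 = 16 * Q t := by
      intro t ht
      have hx := hQpos t ht
      have hsq : (Q t ^ ((1:ℝ)/2))^2 = Q t := by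
        rw [← Real.rpow_natCast (Q t ^ ((1:ℝ)/2)) 2, ← Real.rpow_mul hx.le]
        norm_num
      have hft := h0' t ht
      simp only [hGdef] at hft
      have hstep : f t - k1*t - k0 = 4 * Q t ^ ((1:ℝ)/2) / D0 := by linarith
      rw [hstep]
      field_simp
      linear_combination 16 * hsq
    refine ⟨k1^2*D0^2 - 8*c, -2*k1*D0^2, D0^2, 2*k1*k0*D0^2 - 16*bb, -2*k0*D0^2,
      k0^2*D0^2 - 16*aa, ?_, ?_⟩
    · rintro ⟨-, -, h, -⟩
      exact hD0 (pow_eq_zero_iff two_ne_zero |>.mp h)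
    · intro t ht
      have hk := key t ht
      simp only [hQdef] at hk
      linear_combination hk
end

section
/- Let a ∈ ℝ with a ≠ 0, let ε ∈ {−1, 1}, and let x : ℝ → ℝ² be a smooth curve satisfying x''' = a·x'' − ((2/9)a² + ε)·x' such that x'(t) and x''(t) are linearly independent for every t. Then there exist A ∈ GL(2, ℝ), v ∈ ℝ², an open interval J ⊆ ℝ, a smooth map φ : ℝ → J with φ'(t) ≠ 0 for all t, and a curve c : J → ℝ² from the following list, such that x(t) = A·c(φ(t)) + v for all t: (i) c(s) = e^{γs}·(cos s, sin s) on J = ℝ for some γ ≠ 0; (ii) c(s) = (s, e^s) on J = ℝ; (iii) c(s) = (s, s·log s) on J = (0, ∞); (iv) c(s) = (s, s^δ) on J = (0, ∞) for some δ ∉ {0, 1, −1, 2, 1/2}. -/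
set_option maxHeartbeats 1000000

section helpers
variable {F : Type*} [NormedAddCommGroup F] [NormedSpace ℝ F]

lemma my_constOf {f : ℝ → F} (h : ∀ t, HasDerivAt f 0 t) (t : ℝ) : f t = f 0 :=
  is_const_of_deriv_eq_zero (fun s => (h s).differentiableAt) (fun s => (h s).deriv) t 0

lemma my_expOf {f : ℝ → F} {c : ℝ} (h : ∀ t, HasDerivAt f (c • f t) t) (t : ℝ) :
    f t = Real.exp (c * t) • f 0 := by
  have h1 : ∀ s, HasDerivAt (fun r => Real.exp (-(c * r)) • f r) 0 s := by
    intro s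
    have h0 : HasDerivAt (fun r : ℝ => -(c * r)) (-c) s := by
      exact (by simpa using ((hasDerivAt_id s).const_mul c) : HasDerivAt (fun r : ℝ => c * r) c s).neg
    have hc : HasDerivAt (fun r : ℝ => Real.exp (-(c * r))) (Real.exp (-(c * s)) * (-c)) s :=
      h0.exp
    have h2 := hc.smul (h s)
    have h3 : Real.exp (-(c*s)) • (c • f s) + (Real.exp (-(c*s)) * (-c)) • f s = 0 := by
      rw [smul_smul, ← add_smul]; ring_nf; simp
    rwa [h3] at h2
  have key : Real.exp (-(c * t)) • f t = f 0 := by simpa using my_constOf h1 t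
  calc f t = Real.exp (c*t) • (Real.exp (-(c*t)) • f t) := by
        rw [smul_smul, ← Real.exp_add]; simp
    _ = Real.exp (c*t) • f 0 := by rw [key]

lemma my_integrate {x G c : ℝ → F} (hx : ∀ t, HasDerivAt x (c t) t)
    (hG : ∀ t, HasDerivAt G (c t) t) (t : ℝ) : x t = (x 0 - G 0) + G t := by
  have h : x t - G t = x 0 - G 0 :=
    my_constOf (f := fun s => x s - G s) (fun s => by have h := (hx s).sub (hG s); rw [sub_self] at h; exact h) t
  rw [← h]; abel

lemma my_indep_transfer {V1 V2 : F} {p q r s : ℝ} (hdet : p * s - q * r ≠ 0)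
    (h : LinearIndependent ℝ ![p • V1 + q • V2, r • V1 + s • V2]) :
    LinearIndependent ℝ ![V1, V2] := by
  rw [LinearIndependent.pair_iff] at h ⊢
  intro c d hcd
  have hz : ((c*s-d*r)/(p*s-q*r)) • (p • V1 + q • V2)
      + ((d*p-c*q)/(p*s-q*r)) • (r • V1 + s • V2) = c • V1 + d • V2 := by
    match_scalars
    · linear_combination c * mul_inv_cancel₀ hdet
    · linear_combination d * mul_inv_cancel₀ hdet
  obtain ⟨k1, k2⟩ := h _ _ (by rw [hz, hcd])
  rw [div_eq_zero_iff] at k1 k2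
  have k1' : c*s-d*r = 0 := k1.resolve_right hdet
  have k2' : d*p-c*q = 0 := k2.resolve_right hdet
  constructor
  · have : c * (p*s-q*r) = 0 := by linear_combination p*k1' + r*k2'
    exact (mul_eq_zero.mp this).resolve_right hdet
  · have : d * (p*s-q*r) = 0 := by linear_combination q*k1' + s*k2'
    exact (mul_eq_zero.mp this).resolve_right hdet

end helpers

lemma my_hasDerivAt_exp (μ t : ℝ) :
    HasDerivAt (fun s => Real.exp (μ*s)) (μ * Real.exp (μ*t)) t := by
  have h0 : HasDerivAt (fun s : ℝ => μ*s) μ t := by simpa using (hasDerivAt_id t).const_mul μ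
  simpa [mul_comm] using h0.exp

lemma my_hasDerivAt_cos (q t : ℝ) :
    HasDerivAt (fun s => Real.cos (q*s)) (-(q * Real.sin (q*t))) t := by
  have h0 : HasDerivAt (fun s : ℝ => q*s) q t := by simpa using (hasDerivAt_id t).const_mul q
  simpa [mul_comm] using h0.cos

lemma my_hasDerivAt_sin (q t : ℝ) :
    HasDerivAt (fun s => Real.sin (q*s)) (q * Real.cos (q*t)) t := by
  have h0 : HasDerivAt (fun s : ℝ => q*s) q t := by simpa using (hasDerivAt_id t).const_mul q
  simpa [mul_comm] using h0.sin

lemma my_mkGL {V1 V2 : Fin 2 → ℝ} (h : LinearIndependent ℝ ![V1, V2]) :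
    ∃ A : Matrix.GeneralLinearGroup (Fin 2) ℝ,
      ∀ p q : ℝ, (A : Matrix (Fin 2) (Fin 2) ℝ).mulVec ![p, q] = p • V1 + q • V2 := by
  have hdet : V1 0 * V2 1 - V2 0 * V1 1 ≠ 0 := by
    intro h0
    rw [LinearIndependent.pair_iff] at h
    have k1 := h (V2 1) (-(V1 1)) (by
      funext i; fin_cases i <;> simp <;> linarith)
    have k2 := h (V2 0) (-(V1 0)) (by
      funext i; fin_cases i <;> simp <;> linarith)
    have hV1 : V1 = 0 := by
      funext i; fin_cases i
      · simpa using k2.2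
      · simpa using k1.2
    obtain ⟨e1, -⟩ := h 1 0 (by simp [hV1])
    exact one_ne_zero e1
  have hdet' : (Matrix.of ![![V1 0, V2 0], ![V1 1, V2 1]]).det ≠ 0 := by
    rw [Matrix.det_fin_two]; simpa using hdet
  refine ⟨Matrix.GeneralLinearGroup.mkOfDetNeZero _ hdet', fun p q => ?_⟩
  have hco : ((Matrix.GeneralLinearGroup.mkOfDetNeZero _ hdet' :
      Matrix.GeneralLinearGroup (Fin 2) ℝ) : Matrix (Fin 2) (Fin 2) ℝ)
      = Matrix.of ![![V1 0, V2 0], ![V1 1, V2 1]] := rfl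
  rw [hco]
  funext i; fin_cases i <;>
    simp [Matrix.mulVec, dotProduct, Fin.sum_univ_two, mul_comm]

/-- Classification of nondegenerate plane curves with nonzero constant
general-affine curvature: up to a general-affine motion and reparametrization,
they are logarithmic spirals, `(s, eˢ)`, `(s, s·log s)` or power curves. -/
theorem stmt_6 (a ε : ℝ) (ha : a ≠ 0) (hε : ε = 1 ∨ ε = -1)
    (x : ℝ → Fin 2 → ℝ) (hx : ContDiff ℝ (⊤ : ℕ∞) x)
    (hode : ∀ t, iteratedDeriv 3 x t
      = a • iteratedDeriv 2 x t - ((2/9) * a^2 + ε) • deriv x t)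
    (hind : ∀ t, LinearIndependent ℝ ![deriv x t, iteratedDeriv 2 x t]) :
    ∃ A : Matrix.GeneralLinearGroup (Fin 2) ℝ, ∃ v : Fin 2 → ℝ, ∃ φ : ℝ → ℝ,
      ContDiff ℝ (⊤ : ℕ∞) φ ∧ (∀ t, deriv φ t ≠ 0) ∧
      ((∃ γ : ℝ, γ ≠ 0 ∧ ∀ t, x t = (A : Matrix (Fin 2) (Fin 2) ℝ).mulVec
          ![Real.exp (γ * φ t) * Real.cos (φ t),
            Real.exp (γ * φ t) * Real.sin (φ t)] + v) ∨
       (∀ t, x t = (A : Matrix (Fin 2) (Fin 2) ℝ).mulVec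
          ![φ t, Real.exp (φ t)] + v) ∨
       ((∀ t, 0 < φ t) ∧ ∀ t, x t = (A : Matrix (Fin 2) (Fin 2) ℝ).mulVec
          ![φ t, φ t * Real.log (φ t)] + v) ∨
       (∃ δ : ℝ, δ ≠ 0 ∧ δ ≠ 1 ∧ δ ≠ -1 ∧ δ ≠ 2 ∧ δ ≠ 1/2 ∧ (∀ t, 0 < φ t) ∧
          ∀ t, x t = (A : Matrix (Fin 2) (Fin 2) ℝ).mulVec
            ![φ t, (φ t) ^ δ] + v)) := by
  have hεne : ε ≠ 0 := by rcases hε with h|h <;> rw [h] <;> norm_num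
  have hx' : ContDiff ℝ ((⊤ : ℕ∞) : WithTop ℕ∞) x := hx.of_le (by simp)
  obtain ⟨hxd, hcu⟩ := contDiff_infty_iff_deriv.mp hx'
  obtain ⟨hud, hcw⟩ := contDiff_infty_iff_deriv.mp hcu
  obtain ⟨hwd, -⟩ := contDiff_infty_iff_deriv.mp hcw
  set b : ℝ := 2/9 * a^2 + ε with hb_def
  set u : ℝ → Fin 2 → ℝ := deriv x with hu_def
  set w : ℝ → Fin 2 → ℝ := deriv u with hw_def
  have h2 : iteratedDeriv 2 x = w := by
    rw [hw_def, hu_def]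
    show iteratedDeriv (1+1) x = deriv (deriv x)
    rw [iteratedDeriv_succ, iteratedDeriv_one]
  have h3 : iteratedDeriv 3 x = deriv w := by
    show iteratedDeriv (2+1) x = deriv w
    rw [iteratedDeriv_succ, h2]
  have hX : ∀ t, HasDerivAt x (u t) t := fun t => (hxd t).hasDerivAt
  have hU : ∀ t, HasDerivAt u (w t) t := fun t => (hud t).hasDerivAt
  have hODE : ∀ t, deriv w t = a • w t - b • u t := by
    intro t; have h := hode t; rw [h3, h2] at h; exact h
  have hW : ∀ t, HasDerivAt w (a • w t - b • u t) t := fun t => (hODE t) ▸ (hwd t).hasDerivAt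
  have hind' : ∀ t, LinearIndependent ℝ ![u t, w t] := fun t => by
    have := hind t; rwa [h2] at this
  by_cases hb0 : b = 0
  · -- case (ii): x''' = a x''
    have hWf : ∀ t, w t = Real.exp (a*t) • w 0 :=
      my_expOf (fun t => by simpa [hb0] using hW t)
    have hG : ∀ t, HasDerivAt (fun s => (a⁻¹ * Real.exp (a*s)) • w 0) (w t) t := by
      intro t
      have h1 := ((my_hasDerivAt_exp a t).const_mul a⁻¹).smul_const (w 0)
      rw [hWf t]
      refine h1.congr_deriv (Eq.symm ?_)
      rw [← mul_assoc, inv_mul_cancel₀ ha, one_mul]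
    have hUf : ∀ t, u t = (u 0 - a⁻¹ • w 0) + (a⁻¹ * Real.exp (a*t)) • w 0 := by
      intro t
      have h := my_integrate hU hG t
      simpa using h
    have hG2 : ∀ t, HasDerivAt
        (fun s => s • (u 0 - a⁻¹ • w 0) + ((a⁻¹*a⁻¹) * Real.exp (a*s)) • w 0) (u t) t := by
      intro t
      have h1 := (hasDerivAt_id t).smul_const (u 0 - a⁻¹ • w 0)
      have h2 := ((my_hasDerivAt_exp a t).const_mul (a⁻¹*a⁻¹)).smul_const (w 0)
      have h3 := h1.add h2
      refine (h3).congr_deriv (Eq.symm ?_)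
      rw [hUf t]
      match_scalars <;> (field_simp; try ring)
    have hxf : ∀ t, x t = (x 0 - (a⁻¹*a⁻¹) • w 0) + t • (u 0 - a⁻¹ • w 0)
        + ((a⁻¹*a⁻¹) * Real.exp (a*t)) • w 0 := by
      intro t
      have h := my_integrate hX hG2 t
      simp only [mul_zero, Real.exp_zero, mul_one, zero_smul, zero_add] at h
      rw [h]; abel
    have hdet3 : a * a^2 - a * 0 ≠ 0 := by
      have : a * a^2 - a * 0 = a^3 := by ring
      rw [this]; exact pow_ne_zero 3 ha
    have hli : LinearIndependent ℝ
        ![a⁻¹ • u 0 - (a⁻¹*a⁻¹) • w 0, (a⁻¹*a⁻¹) • w 0] := by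
      apply my_indep_transfer (p := a) (q := a) (r := 0) (s := a^2) hdet3
      have e : ![a•(a⁻¹ • u 0 - (a⁻¹*a⁻¹) • w 0)+a•((a⁻¹*a⁻¹) • w 0),
          (0:ℝ)•(a⁻¹ • u 0 - (a⁻¹*a⁻¹) • w 0)+(a^2)•((a⁻¹*a⁻¹) • w 0)] = ![u 0, w 0] := by
        funext i; fin_cases i <;> simp <;> (match_scalars <;> (field_simp; try ring))
      rw [e]; exact hind' 0
    obtain ⟨A, hA⟩ := my_mkGL hli
    refine ⟨A, x 0 - (a⁻¹*a⁻¹) • w 0, fun t => a*t, contDiff_const.mul contDiff_id,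
      ?_, Or.inr (Or.inl ?_)⟩
    · intro t
      have : deriv (fun t => a*t) t = a := by
        simpa using ((hasDerivAt_id t).const_mul a).deriv
      rw [this]; exact ha
    · intro t
      rw [hA, hxf t]
      match_scalars <;> (field_simp; try ring)
  · rcases lt_trichotomy (a^2 - 4*b) 0 with hD | hD | hD
    · -- case (i): logarithmic spiral
      set μ : ℝ := a/2 with hμdef
      have hμ0 : μ ≠ 0 := by rw [hμdef]; exact div_ne_zero ha two_ne_zero
      set ω : ℝ := Real.sqrt (4*b - a^2) / 2 with hωdef
      have hωpos : 0 < ω := by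
        rw [hωdef]
        exact div_pos (Real.sqrt_pos.mpr (by linarith)) two_pos
      have hωne : ω ≠ 0 := ne_of_gt hωpos
      have hω2 : ω^2 = b - a^2/4 := by
        rw [hωdef, div_pow, Real.sq_sqrt (by linarith : (0:ℝ) ≤ 4*b - a^2)]
        ring
      have hbω : b = ω^2 + a^2/4 := by linarith
      set v : ℝ → Fin 2 → ℝ := fun t => Real.exp (-(μ*t)) • u t with hvdef
      set vd : ℝ → Fin 2 → ℝ := fun t => Real.exp (-(μ*t)) • (w t - μ • u t) with hvddef
      have hexpneg : ∀ t : ℝ, HasDerivAt (fun r : ℝ => Real.exp (-(μ*r)))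
          (Real.exp (-(μ*t)) * (-μ)) t := by
        intro t
        have h0 : HasDerivAt (fun r : ℝ => -(μ * r)) (-μ) t := by
          exact (by simpa using ((hasDerivAt_id t).const_mul μ) : HasDerivAt (fun r : ℝ => μ * r) μ t).neg
        exact h0.exp
      have hv : ∀ t, HasDerivAt v (vd t) t := by
        intro t
        have h1 := (hexpneg t).smul (hU t)
        rw [hvdef, hvddef]
        refine (h1).congr_deriv (Eq.symm ?_)
        match_scalars <;> ring
      have hvd : ∀ t, HasDerivAt vd (-(ω^2) • v t) t := by
        intro t
        have h1 := (hexpneg t).smul ((hW t).sub ((hU t).const_smul μ))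
        rw [hvddef]
        refine (h1).congr_deriv (Eq.symm ?_)
        simp only [hvdef, Pi.sub_apply, Pi.smul_apply]
        rw [hbω, hμdef]
        match_scalars <;> ring
      set C1 : ℝ → Fin 2 → ℝ :=
        fun t => Real.cos (ω*t) • v t - (ω⁻¹ * Real.sin (ω*t)) • vd t with hC1def
      set C2 : ℝ → Fin 2 → ℝ :=
        fun t => Real.sin (ω*t) • v t + (ω⁻¹ * Real.cos (ω*t)) • vd t with hC2def
      have hC1 : ∀ t, HasDerivAt C1 0 t := by
        intro t
        have h1 := (my_hasDerivAt_cos ω t).smul (hv t)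
        have h2 := ((my_hasDerivAt_sin ω t).const_mul ω⁻¹).smul (hvd t)
        rw [hC1def]
        refine (h1.sub h2).congr_deriv (Eq.symm ?_)
        match_scalars <;> (field_simp [hωne]; try ring)
      have hC2 : ∀ t, HasDerivAt C2 0 t := by
        intro t
        have h1 := (my_hasDerivAt_sin ω t).smul (hv t)
        have h2 := ((my_hasDerivAt_cos ω t).const_mul ω⁻¹).smul (hvd t)
        rw [hC2def]
        refine (h1.add h2).congr_deriv (Eq.symm ?_)
        match_scalars <;> (field_simp [hωne]; try ring)
      have hC1f : ∀ t, C1 t = C1 0 := my_constOf hC1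
      have hC2f : ∀ t, C2 t = C2 0 := my_constOf hC2
      have hvf : ∀ t, v t = Real.cos (ω*t) • C1 0 + Real.sin (ω*t) • C2 0 := by
        intro t
        have key : Real.cos (ω*t) • C1 t + Real.sin (ω*t) • C2 t = v t := by
          simp only [hC1def, hC2def]
          simp only [smul_sub, smul_add, smul_smul]
          have hp : Real.cos (ω*t) * Real.cos (ω*t) = 1 - Real.sin (ω*t) * Real.sin (ω*t) := by
            linear_combination Real.sin_sq_add_cos_sq (ω*t)
          rw [hp]
          module
        rw [hC1f t, hC2f t] at key
        exact key.symm
      have huf : ∀ t, u t = (Real.exp (μ*t) * Real.cos (ω*t)) • C1 0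
          + (Real.exp (μ*t) * Real.sin (ω*t)) • C2 0 := by
        intro t
        have h0 : Real.exp (μ*t) • v t = u t := by
          simp only [hvdef]
          rw [smul_smul, ← Real.exp_add]
          simp
        rw [← h0, hvf t]
        match_scalars <;> ring
      have hμω : μ^2 + ω^2 ≠ 0 := by positivity
      have hG : ∀ t, HasDerivAt (fun s =>
          (Real.exp (μ*s) * Real.cos (ω*s)) • ((μ^2+ω^2)⁻¹ • (μ • C1 0 - ω • C2 0))
          + (Real.exp (μ*s) * Real.sin (ω*s)) • ((μ^2+ω^2)⁻¹ • (ω • C1 0 + μ • C2 0))) (u t) t := by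
        intro t
        have h1 := ((my_hasDerivAt_exp μ t).mul (my_hasDerivAt_cos ω t)).smul_const
          ((μ^2+ω^2)⁻¹ • (μ • C1 0 - ω • C2 0))
        have h2 := ((my_hasDerivAt_exp μ t).mul (my_hasDerivAt_sin ω t)).smul_const
          ((μ^2+ω^2)⁻¹ • (ω • C1 0 + μ • C2 0))
        refine (h1.add h2).congr_deriv (Eq.symm ?_)
        rw [huf t]
        match_scalars <;> (field_simp [hμω]; try ring)
      have hxf : ∀ t, x t = (x 0 - (μ^2+ω^2)⁻¹ • (μ • C1 0 - ω • C2 0))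
          + (Real.exp (μ*t) * Real.cos (ω*t)) • ((μ^2+ω^2)⁻¹ • (μ • C1 0 - ω • C2 0))
          + (Real.exp (μ*t) * Real.sin (ω*t)) • ((μ^2+ω^2)⁻¹ • (ω • C1 0 + μ • C2 0)) := by
        intro t
        have h := my_integrate hX hG t
        simp only [mul_zero, Real.exp_zero, Real.cos_zero, Real.sin_zero, mul_one, one_mul,
          zero_smul, add_zero, one_smul] at h
        rw [h]
        abel
      have hC10 : C1 0 = u 0 := by
        rw [hC1def]
        simp [hvdef, hvddef]
      have hC20 : C2 0 = ω⁻¹ • (w 0 - μ • u 0) := by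
        rw [hC2def]
        simp [hvdef, hvddef]
      have hliC : LinearIndependent ℝ ![C1 0, C2 0] := by
        apply my_indep_transfer (p := 1) (q := 0) (r := μ) (s := ω)
          (by simpa using hωne)
        have e : ![(1:ℝ)•C1 0+(0:ℝ)•C2 0, μ•C1 0+ω•C2 0] = ![u 0, w 0] := by
          funext i; fin_cases i <;> simp [hC10, hC20] <;>
            (match_scalars <;> (field_simp [hωne]; try ring))
        rw [e]; exact hind' 0
      have hdetμω : μ * μ - ω * (-ω) ≠ 0 := by
        have : μ * μ - ω * (-ω) = μ^2 + ω^2 := by ring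
        rw [this]; exact hμω
      have hli : LinearIndependent ℝ
          ![(μ^2+ω^2)⁻¹ • (μ • C1 0 - ω • C2 0), (μ^2+ω^2)⁻¹ • (ω • C1 0 + μ • C2 0)] := by
        apply my_indep_transfer (p := μ) (q := ω) (r := -ω) (s := μ) hdetμω
        have e : ![μ•((μ^2+ω^2)⁻¹ • (μ • C1 0 - ω • C2 0))+ω•((μ^2+ω^2)⁻¹ • (ω • C1 0 + μ • C2 0)),
            (-ω)•((μ^2+ω^2)⁻¹ • (μ • C1 0 - ω • C2 0))+μ•((μ^2+ω^2)⁻¹ • (ω • C1 0 + μ • C2 0))]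
            = ![C1 0, C2 0] := by
          funext i; fin_cases i <;> simp <;>
            (match_scalars <;> (field_simp [hμω]; try ring))
        rw [e]; exact hliC
      obtain ⟨A, hA⟩ := my_mkGL hli
      refine ⟨A, x 0 - (μ^2+ω^2)⁻¹ • (μ • C1 0 - ω • C2 0), fun t => ω*t,
        contDiff_const.mul contDiff_id, ?_,
        Or.inl ⟨μ/ω, div_ne_zero hμ0 hωne, ?_⟩⟩
      · intro t
        have : deriv (fun t => ω*t) t = ω := by
          simpa using ((hasDerivAt_id t).const_mul ω).deriv
        rw [this]; exact hωne
      · intro t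
        rw [hA, show μ/ω*(ω*t) = μ*t by field_simp, hxf t]
        abel
    · -- case (iii): repeated root, (s, s log s)
      have hb4 : b = a^2/4 := by linear_combination (-(1:ℝ)/4)*hD
      set μ : ℝ := a/2 with hμdef
      have hμ0 : μ ≠ 0 := by rw [hμdef]; exact div_ne_zero ha two_ne_zero
      have hg : ∀ t, HasDerivAt (fun s => w s - μ • u s) (μ • (w t - μ • u t)) t := by
        intro t
        have h1 := (hW t).sub ((hU t).const_smul μ)
        refine (h1).congr_deriv (Eq.symm ?_)
        rw [hb4, hμdef]
        match_scalars <;> ring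
      have hgf : ∀ t, w t - μ • u t = Real.exp (μ*t) • (w 0 - μ • u 0) := by
        intro t
        have h := my_expOf (f := fun s => w s - μ • u s) hg t
        simpa using h
      have hk : ∀ t, HasDerivAt (fun s => Real.exp (-(μ*s)) • u s) (w 0 - μ • u 0) t := by
        intro t
        have h0 : HasDerivAt (fun r : ℝ => -(μ * r)) (-μ) t := by
          exact (by simpa using ((hasDerivAt_id t).const_mul μ) : HasDerivAt (fun r : ℝ => μ * r) μ t).neg
        have h1 := (h0.exp).smul (hU t)
        refine (h1).congr_deriv (Eq.symm ?_)
        have key := hgf t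
        have key' : w t = Real.exp (μ*t) • (w 0 - μ • u 0) + μ • u t := by
          rw [← key]; abel
        rw [key', smul_add, smul_smul, ← Real.exp_add]
        simp only [neg_add_cancel, Real.exp_zero, one_smul]
        match_scalars <;> ring
      have hkid : ∀ t, HasDerivAt (fun s : ℝ => s • (w 0 - μ • u 0)) (w 0 - μ • u 0) t := by
        intro t
        simpa using (hasDerivAt_id t).smul_const (w 0 - μ • u 0)
      have huf : ∀ t, u t = Real.exp (μ*t) • u 0 + (t * Real.exp (μ*t)) • (w 0 - μ • u 0) := by
        intro t
        have h := my_integrate hk hkid t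
        simp only [mul_zero, neg_zero, Real.exp_zero, one_smul, zero_smul, sub_zero] at h
        have h2 : Real.exp (μ*t) • (Real.exp (-(μ*t)) • u t)
            = Real.exp (μ*t) • (u 0 + t • (w 0 - μ • u 0)) := by rw [h]
        rw [smul_smul, ← Real.exp_add] at h2
        simp only [add_neg_cancel, Real.exp_zero, one_smul] at h2
        rw [h2]
        match_scalars <;> ring
      have hG : ∀ t, HasDerivAt (fun s => (μ⁻¹*Real.exp (μ*s)) • u 0
          + ((s*μ⁻¹ - μ⁻¹*μ⁻¹)*Real.exp (μ*s)) • (w 0 - μ • u 0)) (u t) t := by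
        intro t
        have h1 := ((my_hasDerivAt_exp μ t).const_mul μ⁻¹).smul_const (u 0)
        have hpoly : HasDerivAt (fun s : ℝ => s*μ⁻¹ - μ⁻¹*μ⁻¹) μ⁻¹ t := by
          simpa using ((hasDerivAt_id t).mul_const μ⁻¹).sub_const (μ⁻¹*μ⁻¹)
        have h2 := (hpoly.mul (my_hasDerivAt_exp μ t)).smul_const (w 0 - μ • u 0)
        refine ((h1.add h2)).congr_deriv (Eq.symm ?_)
        rw [huf t]
        match_scalars <;> (field_simp [hμ0]; try ring)
      have hxf : ∀ t, x t = (x 0 - (μ⁻¹ • u 0 - (μ⁻¹*μ⁻¹) • (w 0 - μ • u 0)))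
          + Real.exp (μ*t) • (μ⁻¹ • u 0 - (μ⁻¹*μ⁻¹) • (w 0 - μ • u 0))
          + (Real.exp (μ*t)*(μ*t)) • ((μ⁻¹*μ⁻¹) • (w 0 - μ • u 0)) := by
        intro t
        have h := my_integrate hX hG t
        simp only [mul_zero, zero_mul, Real.exp_zero, mul_one, zero_sub, sub_zero] at h
        rw [h]
        match_scalars <;> (field_simp [hμ0]; try ring)
      have hdetμ : μ * (2*μ^2) - μ * μ^2 ≠ 0 := by
        have : μ * (2*μ^2) - μ * μ^2 = μ^3 := by ring
        rw [this]; exact pow_ne_zero 3 hμ0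
      have hli : LinearIndependent ℝ
          ![μ⁻¹ • u 0 - (μ⁻¹*μ⁻¹) • (w 0 - μ • u 0), (μ⁻¹*μ⁻¹) • (w 0 - μ • u 0)] := by
        apply my_indep_transfer (p := μ) (q := μ) (r := μ^2) (s := 2*μ^2) hdetμ
        have e : ![μ•(μ⁻¹ • u 0 - (μ⁻¹*μ⁻¹) • (w 0 - μ • u 0))+μ•((μ⁻¹*μ⁻¹) • (w 0 - μ • u 0)),
            (μ^2)•(μ⁻¹ • u 0 - (μ⁻¹*μ⁻¹) • (w 0 - μ • u 0))+(2*μ^2)•((μ⁻¹*μ⁻¹) • (w 0 - μ • u 0))]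
            = ![u 0, w 0] := by
          funext i; fin_cases i <;> simp <;> (match_scalars <;> (field_simp [hμ0]; try ring))
        rw [e]; exact hind' 0
      obtain ⟨A, hA⟩ := my_mkGL hli
      refine ⟨A, x 0 - (μ⁻¹ • u 0 - (μ⁻¹*μ⁻¹) • (w 0 - μ • u 0)), fun t => Real.exp (μ*t),
        Real.contDiff_exp.comp (contDiff_const.mul contDiff_id),
        ?_, Or.inr (Or.inr (Or.inl ⟨fun t => Real.exp_pos _, ?_⟩))⟩
      · intro t
        rw [(my_hasDerivAt_exp μ t).deriv]
        exact mul_ne_zero hμ0 (Real.exp_ne_zero _)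
      · intro t
        rw [hA, Real.log_exp, hxf t]
        match_scalars <;> ring
    · -- case (iv): distinct real roots, power curve
      set sq : ℝ := Real.sqrt (a^2 - 4*b) with hsqdef
      have hsqpos : 0 < sq := Real.sqrt_pos.mpr hD
      have hsqne : sq ≠ 0 := ne_of_gt hsqpos
      have hsq2 : sq^2 = a^2 - 4*b := Real.sq_sqrt hD.le
      set l1 : ℝ := (a+sq)/2 with hl1def
      set l2 : ℝ := (a-sq)/2 with hl2def
      have hsum : l1 + l2 = a := by rw [hl1def, hl2def]; ring
      have hprod : l1 * l2 = b := by
        rw [hl1def, hl2def]; linear_combination (-(1:ℝ)/4) * hsq2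
      have ha' : a = l1 + l2 := hsum.symm
      have hb' : b = l1 * l2 := hprod.symm
      have hdiff : l1 - l2 = sq := by rw [hl1def, hl2def]; ring
      have hl1ne : l1 ≠ 0 := fun h => hb0 (by rw [hb', h, zero_mul])
      have hl2ne : l2 ≠ 0 := fun h => hb0 (by rw [hb', h, mul_zero])
      have hne12 : l1 ≠ l2 := by
        intro h
        rw [h] at hdiff
        simp at hdiff
        exact hsqne hdiff.symm
      have hg1 : ∀ t, HasDerivAt (fun s => w s - l2 • u s) (l1 • (w t - l2 • u t)) t := by
        intro t
        have h1 := (hW t).sub ((hU t).const_smul l2)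
        refine (h1).congr_deriv (Eq.symm ?_)
        rw [ha', hb']
        match_scalars <;> ring
      have hg2 : ∀ t, HasDerivAt (fun s => w s - l1 • u s) (l2 • (w t - l1 • u t)) t := by
        intro t
        have h1 := (hW t).sub ((hU t).const_smul l1)
        refine (h1).congr_deriv (Eq.symm ?_)
        rw [ha', hb']
        match_scalars <;> ring
      have hg1f : ∀ t, w t - l2 • u t = Real.exp (l1*t) • (w 0 - l2 • u 0) := by
        intro t
        have h := my_expOf (f := fun s => w s - l2 • u s) hg1 t
        simpa using h
      have hg2f : ∀ t, w t - l1 • u t = Real.exp (l2*t) • (w 0 - l1 • u 0) := by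
        intro t
        have h := my_expOf (f := fun s => w s - l1 • u s) hg2 t
        simpa using h
      have huf : ∀ t, u t = Real.exp (l1*t) • (sq⁻¹ • (w 0 - l2 • u 0))
          + Real.exp (l2*t) • (-(sq⁻¹) • (w 0 - l1 • u 0)) := by
        intro t
        have h0 : sq • u t = (w t - l2 • u t) - (w t - l1 • u t) := by
          rw [← hdiff]
          match_scalars <;> ring
        rw [hg1f t, hg2f t] at h0
        calc u t = sq⁻¹ • (sq • u t) := by
              rw [smul_smul, inv_mul_cancel₀ hsqne, one_smul]
          _ = _ := by rw [h0]; match_scalars <;> ring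
      have hG : ∀ t, HasDerivAt (fun s => (l1⁻¹*Real.exp (l1*s)) • (sq⁻¹ • (w 0 - l2 • u 0))
          + (l2⁻¹*Real.exp (l2*s)) • (-(sq⁻¹) • (w 0 - l1 • u 0))) (u t) t := by
        intro t
        have h1 := ((my_hasDerivAt_exp l1 t).const_mul l1⁻¹).smul_const (sq⁻¹ • (w 0 - l2 • u 0))
        have h2 := ((my_hasDerivAt_exp l2 t).const_mul l2⁻¹).smul_const (-(sq⁻¹) • (w 0 - l1 • u 0))
        refine ((h1.add h2)).congr_deriv (Eq.symm ?_)
        rw [huf t]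
        match_scalars <;> (field_simp [hl1ne, hl2ne, hsqne]; try ring)
      have hxf : ∀ t, x t = (x 0 - ((l1⁻¹*sq⁻¹) • (w 0 - l2 • u 0)
            + (-(l2⁻¹*sq⁻¹)) • (w 0 - l1 • u 0)))
          + Real.exp (l1*t) • ((l1⁻¹*sq⁻¹) • (w 0 - l2 • u 0))
          + Real.exp (l2*t) • ((-(l2⁻¹*sq⁻¹)) • (w 0 - l1 • u 0)) := by
        intro t
        have h := my_integrate hX hG t
        simp only [mul_zero, Real.exp_zero, mul_one] at h
        rw [h]
        match_scalars <;> (field_simp; try ring)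
      have hdetl : l1 * l2^2 - l2 * l1^2 ≠ 0 := by
        have : l1 * l2^2 - l2 * l1^2 = l1*l2*(l2-l1) := by ring
        rw [this]
        exact mul_ne_zero (mul_ne_zero hl1ne hl2ne) (sub_ne_zero.mpr hne12.symm)
      have hli : LinearIndependent ℝ
          ![(l1⁻¹*sq⁻¹) • (w 0 - l2 • u 0), (-(l2⁻¹*sq⁻¹)) • (w 0 - l1 • u 0)] := by
        apply my_indep_transfer (p := l1) (q := l2) (r := l1^2) (s := l2^2) hdetl
        have e : ![l1•((l1⁻¹*sq⁻¹) • (w 0 - l2 • u 0))+l2•((-(l2⁻¹*sq⁻¹)) • (w 0 - l1 • u 0)),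
            (l1^2)•((l1⁻¹*sq⁻¹) • (w 0 - l2 • u 0))+(l2^2)•((-(l2⁻¹*sq⁻¹)) • (w 0 - l1 • u 0))]
            = ![u 0, w 0] := by
          rw [← hdiff]
          funext i; fin_cases i <;> simp <;>
            (match_scalars <;> (field_simp [hl1ne, hl2ne, sub_ne_zero.mpr hne12]; try ring))
        rw [e]; exact hind' 0
      obtain ⟨A, hA⟩ := my_mkGL hli
      have hpow : ∀ t, Real.exp (l1*t) ^ (l2/l1) = Real.exp (l2*t) := by
        intro t
        rw [Real.rpow_def_of_pos (Real.exp_pos _), Real.log_exp]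
        congr 1
        field_simp
      refine ⟨A, x 0 - ((l1⁻¹*sq⁻¹) • (w 0 - l2 • u 0) + (-(l2⁻¹*sq⁻¹)) • (w 0 - l1 • u 0)),
        fun t => Real.exp (l1*t),
        Real.contDiff_exp.comp (contDiff_const.mul contDiff_id),
        ?_, Or.inr (Or.inr (Or.inr ⟨l2/l1, ?_, ?_, ?_, ?_, ?_, fun t => Real.exp_pos _, ?_⟩))⟩
      · intro t
        rw [(my_hasDerivAt_exp l1 t).deriv]
        exact mul_ne_zero hl1ne (Real.exp_ne_zero _)
      · exact div_ne_zero hl2ne hl1ne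
      · intro h
        rw [div_eq_one_iff_eq hl1ne] at h
        exact hne12 h.symm
      · intro h
        rw [div_eq_iff hl1ne] at h
        exact ha (by linear_combination (-1:ℝ)*hsum + h)
      · intro h
        rw [div_eq_iff hl1ne] at h
        apply hεne
        have hl1 : l1 = a/3 := by
          have := hsum
          rw [h] at this
          linarith
        have hb2 : b = 2/9*a^2 := by
          rw [← hprod, h, hl1]; ring
        linarith [hb_def]
      · intro h
        rw [div_eq_iff hl1ne] at h
        apply hεne
        have hl2' : l2 = a/3 := by linarith
        have hl1' : l1 = 2*a/3 := by linarith
        have hb2 : b = 2/9*a^2 := by rw [← hprod, hl1', hl2']; ring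
        linarith [hb_def]
      · intro t
        rw [hA, hpow t, hxf t]
        match_scalars <;> ring
end

section
/- Let ε ∈ {−1, 1}, let k : ℝ → ℝ be smooth and satisfy the plane extremal equation k''' + (3/2)k·k'' + (1/2)(k')² + (1/2)k²·k' + ε·k' = 0, and let x = (x₁, x₂) : ℝ → ℝ² be a smooth curve satisfying the general-affine plane curve equation x''' + (3/2)k·x'' + (ε + (1/2)k' + (1/2)k²)·x' = 0 such that x'(t) and x''(t) are linearly independent for every t. Then there exist constants c₁, c₂, c₃ ∈ ℝ such that k(t) = c₁·x₁(t) + c₂·x₂(t) + c₃ for all t ∈ ℝ. -/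
open Set
open scoped ContDiff

set_option maxHeartbeats 2000000 in
/-- For a general-affine extremal curve, the curvature is an affine function of
the coordinates: `k = c₁·x₁ + c₂·x₂ + c₃` (Verpoort). -/
theorem stmt_7 (ε : ℝ) (hε : ε = 1 ∨ ε = -1)
    (k : ℝ → ℝ) (hk : ContDiff ℝ (⊤ : ℕ∞) k)
    (hkext : ∀ t, iteratedDeriv 3 k t + (3/2) * k t * iteratedDeriv 2 k t
      + (1/2) * (deriv k t)^2 + (1/2) * (k t)^2 * deriv k t + ε * deriv k t = 0)
    (x : ℝ → Fin 2 → ℝ) (hx : ContDiff ℝ (⊤ : ℕ∞) x)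
    (hode : ∀ t, iteratedDeriv 3 x t + ((3/2) * k t) • iteratedDeriv 2 x t
      + (ε + (1/2) * deriv k t + (1/2) * (k t)^2) • deriv x t = 0)
    (hind : ∀ t, LinearIndependent ℝ ![deriv x t, iteratedDeriv 2 x t]) :
    ∃ c₁ c₂ c₃ : ℝ, ∀ t, k t = c₁ * x t 0 + c₂ * x t 1 + c₃ := by
  have hk' : ContDiff ℝ ∞ k := hk.of_le (by simp)
  have hx' : ContDiff ℝ ∞ x := hx.of_le (by simp)
  have hk1 : ContDiff ℝ ∞ (deriv k) := (contDiff_infty_iff_deriv.mp hk').2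
  have hk2 : ContDiff ℝ ∞ (deriv (deriv k)) := (contDiff_infty_iff_deriv.mp hk1).2
  have hx1 : ContDiff ℝ ∞ (deriv x) := (contDiff_infty_iff_deriv.mp hx').2
  have hx2 : ContDiff ℝ ∞ (deriv (deriv x)) := (contDiff_infty_iff_deriv.mp hx1).2
  have h1top : (∞ : WithTop ℕ∞) ≠ 0 := by simp
  have ek2 : iteratedDeriv 2 k = deriv (deriv k) := by
    funext t; rw [iteratedDeriv_succ, iteratedDeriv_one]
  have ek3 : iteratedDeriv 3 k = deriv (deriv (deriv k)) := by
    funext t; rw [iteratedDeriv_succ, ek2]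
  have ex2 : iteratedDeriv 2 x = deriv (deriv x) := by
    funext t; rw [iteratedDeriv_succ, iteratedDeriv_one]
  have ex3 : iteratedDeriv 3 x = deriv (deriv (deriv x)) := by
    funext t; rw [iteratedDeriv_succ, ex2]
  -- the curvature satisfies the same linear ODE
  have hk3 : ∀ t, deriv (deriv (deriv k)) t =
      -((3/2) * k t) * deriv (deriv k) t
      - (ε + (1/2) * deriv k t + (1/2) * (k t)^2) * deriv k t := by
    intro t
    have h := hkext t
    rw [ek3, ek2] at h
    linarith [h, sq_nonneg (deriv k t)]
  have hx3 : ∀ t, deriv (deriv (deriv x)) t =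
      -(((3/2) * k t) • deriv (deriv x) t)
      - (ε + (1/2) * deriv k t + (1/2) * (k t)^2) • deriv x t := by
    intro t
    have h := hode t
    rw [ex3, ex2] at h
    funext i
    have h' := congrFun h i
    simp only [Pi.add_apply, Pi.smul_apply, smul_eq_mul, Pi.zero_apply] at h'
    simp only [Pi.sub_apply, Pi.neg_apply, Pi.smul_apply, smul_eq_mul]
    linarith
  -- choose the coefficients
  set M : Matrix (Fin 2) (Fin 2) ℝ := Matrix.of ![deriv x 0, iteratedDeriv 2 x 0] with hM
  have hMunit : IsUnit M := by
    rw [← Matrix.linearIndependent_rows_iff_isUnit]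
    exact hind 0
  set z : Fin 2 → ℝ := ![deriv k 0, iteratedDeriv 2 k 0] with hz
  set c : Fin 2 → ℝ := M⁻¹.mulVec z with hc
  have hMc : M.mulVec c = z := by
    rw [hc, Matrix.mulVec_mulVec,
      Matrix.mul_nonsing_inv _ ((Matrix.isUnit_iff_isUnit_det M).mp hMunit), Matrix.one_mulVec]
  have hc1 : c 0 * deriv x 0 0 + c 1 * deriv x 0 1 = deriv k 0 := by
    have h := congrFun hMc 0
    simp [hM, hz, Matrix.mulVec, dotProduct, Fin.sum_univ_two] at h
    linarith
  have hc2 : c 0 * deriv (deriv x) 0 0 + c 1 * deriv (deriv x) 0 1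
      = deriv (deriv k) 0 := by
    have h := congrFun hMc 1
    simp [hM, hz, ex2, ek2, Matrix.mulVec, dotProduct, Fin.sum_univ_two] at h
    linarith
  -- the linear functional
  set φ : (Fin 2 → ℝ) →L[ℝ] ℝ :=
    c 0 • ContinuousLinearMap.proj 0 + c 1 • ContinuousLinearMap.proj 1 with hφdef
  have hφ : ∀ w : Fin 2 → ℝ, φ w = c 0 * w 0 + c 1 * w 1 := by
    intro w; simp [hφdef]
  -- the pair function and the vector field
  set f : ℝ → ℝ × ℝ := fun t =>
    (deriv k t - φ (deriv x t), deriv (deriv k) t - φ (deriv (deriv x) t)) with hf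
  set v : ℝ → ℝ × ℝ → ℝ × ℝ := fun t p =>
    (p.2, -((3/2) * k t) * p.2 - (ε + (1/2) * deriv k t + (1/2) * (k t)^2) * p.1) with hv
  have hf' : ∀ t, HasDerivAt f (v t (f t)) t := by
    intro t
    have h1 : HasDerivAt (fun r => deriv k r - φ (deriv x r))
        (deriv (deriv k) t - φ (deriv (deriv x) t)) t :=
      ((hk1.differentiable h1top t).hasDerivAt).sub
        (φ.hasFDerivAt.comp_hasDerivAt t ((hx1.differentiable h1top t).hasDerivAt))
    have h2 : HasDerivAt (fun r => deriv (deriv k) r - φ (deriv (deriv x) r))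
        (deriv (deriv (deriv k)) t - φ (deriv (deriv (deriv x)) t)) t :=
      ((hk2.differentiable h1top t).hasDerivAt).sub
        (φ.hasFDerivAt.comp_hasDerivAt t ((hx2.differentiable h1top t).hasDerivAt))
    have h3 : deriv (deriv (deriv k)) t - φ (deriv (deriv (deriv x)) t)
        = -((3/2) * k t) * (deriv (deriv k) t - φ (deriv (deriv x) t))
          - (ε + (1/2) * deriv k t + (1/2) * (k t)^2) * (deriv k t - φ (deriv x t)) := by
      rw [hk3 t, hx3 t, map_sub, map_neg, map_smul, map_smul]
      simp only [smul_eq_mul]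
      ring
    have := h1.prodMk h2
    rw [h3] at this
    exact this
  -- f vanishes at 0
  have hf0 : f 0 = 0 := by
    have e1 : φ (deriv x 0) = deriv k 0 := by rw [hφ]; exact hc1
    have e2 : φ (deriv (deriv x) 0) = deriv (deriv k) 0 := by rw [hφ]; exact hc2
    simp [hf, e1, e2, Prod.ext_iff]
  -- f vanishes everywhere, by uniqueness of ODE solutions on compact intervals
  have hzero : ∀ t, f t = 0 := by
    intro t
    set A : ℝ := |t| + 1 with hA
    have hA0 : 0 < A := by positivity
    obtain ⟨C, hC⟩ := (isCompact_Icc (a := -A) (b := A)).exists_bound_of_continuousOn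
      (f := fun r => |(3/2) * k r| + |ε + (1/2) * deriv k r + (1/2) * (k r)^2|)
      (Continuous.continuousOn
        (((continuous_const.mul hk'.continuous).abs).add
          (((continuous_const.add (continuous_const.mul hk1.continuous)).add
            (continuous_const.mul (hk'.continuous.pow 2))).abs)))
    have hC0 : 0 ≤ C := by
      have h0 := hC 0 ⟨by linarith, by linarith⟩
      rw [Real.norm_eq_abs, abs_of_nonneg (by positivity)] at h0
      exact le_trans (by positivity) h0
    set K : NNReal := Real.toNNReal (1 + C) with hK
    have hKC : (K : ℝ) = 1 + C := Real.coe_toNNReal _ (by linarith)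
    set s : ℝ → Set (ℝ × ℝ) := fun r => if r ∈ Icc (-A) A then univ else ∅ with hs
    have hvlip : ∀ r, LipschitzOnWith K (v r) (s r) := by
      intro r
      by_cases hr : r ∈ Icc (-A) A
      · rw [hs]; simp only [hr, if_pos]
        rw [lipschitzOnWith_iff_dist_le_mul]
        intro p _ q _
        have hb := hC r hr
        rw [Real.norm_eq_abs, abs_of_nonneg (by positivity)] at hb
        have hd1 : |p.1 - q.1| ≤ dist p q := by
          rw [Prod.dist_eq]; exact le_max_of_le_left (by rw [Real.dist_eq])
        have hd2 : |p.2 - q.2| ≤ dist p q := by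
          rw [Prod.dist_eq]; exact le_max_of_le_right (by rw [Real.dist_eq])
        have hdn : 0 ≤ dist p q := dist_nonneg
        rw [Prod.dist_eq]
        apply max_le
        · rw [Real.dist_eq]
          calc |p.2 - q.2| ≤ dist p q := hd2
          _ ≤ (K : ℝ) * dist p q := by nlinarith
        · rw [Real.dist_eq]
          have : (-((3/2) * k r) * p.2 - (ε + (1/2) * deriv k r + (1/2) * (k r)^2) * p.1)
              - (-((3/2) * k r) * q.2 - (ε + (1/2) * deriv k r + (1/2) * (k r)^2) * q.1)
              = -((3/2) * k r) * (p.2 - q.2)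
                - (ε + (1/2) * deriv k r + (1/2) * (k r)^2) * (p.1 - q.1) := by ring
          rw [hv]
          simp only []
          rw [this]
          have habs : |(-((3/2) * k r)) * (p.2 - q.2)
              - (ε + (1/2) * deriv k r + (1/2) * (k r)^2) * (p.1 - q.1)|
              ≤ |(3/2) * k r| * |p.2 - q.2|
                + |ε + (1/2) * deriv k r + (1/2) * (k r)^2| * |p.1 - q.1| := by
            calc _ ≤ |(-((3/2) * k r)) * (p.2 - q.2)|
                + |(ε + (1/2) * deriv k r + (1/2) * (k r)^2) * (p.1 - q.1)| := abs_sub _ _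
            _ = _ := by rw [abs_mul, abs_mul, abs_neg]
          have h1 : |(3/2) * k r| * |p.2 - q.2| ≤ |(3/2) * k r| * dist p q :=
            mul_le_mul_of_nonneg_left hd2 (abs_nonneg _)
          have h2 : |ε + (1/2) * deriv k r + (1/2) * (k r)^2| * |p.1 - q.1|
              ≤ |ε + (1/2) * deriv k r + (1/2) * (k r)^2| * dist p q :=
            mul_le_mul_of_nonneg_left hd1 (abs_nonneg _)
          calc _ ≤ |(3/2) * k r| * dist p q
              + |ε + (1/2) * deriv k r + (1/2) * (k r)^2| * dist p q := by
                exact le_trans habs (by linarith)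
          _ ≤ C * dist p q := by nlinarith
          _ ≤ (K : ℝ) * dist p q := by nlinarith
      · rw [hs]; simp only [hr, if_neg, if_false]
        exact lipschitzOnWith_empty _ _
    have h0mem : (0:ℝ) ∈ Ioo (-A) A := ⟨by linarith, by linarith⟩
    have key := ODE_solution_unique_of_mem_Icc (v := v) (s := s) (fun r _ => hvlip r) h0mem
      (Continuous.continuousOn (by
        apply Continuous.prodMk
        · exact hk1.continuous.sub (φ.continuous.comp hx1.continuous)
        · exact hk2.continuous.sub (φ.continuous.comp hx2.continuous)))
      (fun r _ => hf' r)
      (fun r hr => by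
        rw [hs]; simp only [mem_Icc] at *
        rw [if_pos ⟨le_of_lt hr.1, le_of_lt hr.2⟩]; trivial)
      (continuousOn_const (c := (0 : ℝ × ℝ)))
      (fun r _ => by
        have hv0 : v r 0 = 0 := by rw [hv]; simp
        rw [hv0]; exact hasDerivAt_const r (0 : ℝ × ℝ))
      (fun r hr => by
        rw [hs]; simp only [mem_Icc] at *
        rw [if_pos ⟨le_of_lt hr.1, le_of_lt hr.2⟩]; trivial)
      (by simpa using hf0)
    have ht : t ∈ Icc (-A) A := ⟨neg_le_of_neg_le (by simpa using neg_le_abs t |>.trans (by linarith)), (le_abs_self t).trans (by linarith)⟩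
    exact key ht
  -- conclude: k - φ ∘ x is constant
  have hdiff : Differentiable ℝ (fun r => k r - φ (x r)) :=
    (hk'.differentiable h1top).sub
      (fun r => (φ.hasFDerivAt.comp_hasDerivAt r ((hx'.differentiable h1top r).hasDerivAt)).differentiableAt)
  have hderiv0 : ∀ r, deriv (fun r => k r - φ (x r)) r = 0 := by
    intro r
    have h : HasDerivAt (fun r => k r - φ (x r)) (deriv k r - φ (deriv x r)) r :=
      ((hk'.differentiable h1top r).hasDerivAt).sub
        (φ.hasFDerivAt.comp_hasDerivAt r ((hx'.differentiable h1top r).hasDerivAt))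
    rw [h.deriv]
    have := hzero r
    rw [hf, Prod.ext_iff] at this
    exact this.1
  refine ⟨c 0, c 1, k 0 - φ (x 0), fun t => ?_⟩
  have hconst := is_const_of_deriv_eq_zero hdiff hderiv0 t 0
  have := hφ (x t)
  linarith [hconst, hφ (x t)]
end

section
/- Fix c ∈ ℝ. The following functions satisfy the plane extremal equation k''' + (3/2)k·k'' + (1/2)(k')² + (1/2)k²·k' + ε·k' = 0 on the indicated domains: with ε = 1, k(t) = 3√2·tanh(√2(t − c)) on ℝ, and k(t) = 3√2·coth(√2(t − c)) on (c, ∞); with ε = −1, k(t) = −3√2·tan(√2(t − c)) on any open interval where tan(√2(t − c)) is defined, k(t) = 3√2·cot(√2(t − c)) on any open interval where cot(√2(t − c)) is defined, and k(t) = √2 + 3/(t − c) as well as k(t) = −√2 + 3/(t − c) on (c, ∞). -/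
/-!
Every solution of a Riccati equation `k' = F(k) := a + b·k − k²/3` with `a = 6(b² + ε)` solves
the plane extremal equation: differentiating the Riccati equation writes `k''` and `k'''` as
polynomials in `k`, and the left-hand side of the extremal equation collapses to
`F(k)·(b² + ε − a/6)`.
With `b = 0`, `k(t) = 3√2·z(√2(t − c))` solves it as soon as `z' = ε − z²`, which holds for
`z = f/g` whenever `f' = ε·g` and `g' = f`: this covers `tanh`, `coth` (`ε = 1`) and `−tan`, `cot`
(`ε = −1`). With `ε = −1` and `b = ±2√2/3`, the functions `±√2 + 3/(t − c)` solve it.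
-/

/-- The plane extremal equation
`k''' + (3/2)k·k'' + (1/2)(k')² + (1/2)k²·k' + ε·k' = 0` at a point `t`. -/
def PlaneExtremalEq (ε : ℝ) (k : ℝ → ℝ) (t : ℝ) : Prop :=
  iteratedDeriv 3 k t + (3/2) * k t * iteratedDeriv 2 k t
    + (1/2) * (deriv k t)^2 + (1/2) * (k t)^2 * deriv k t + ε * deriv k t = 0

open Filter Topology Polynomial

section AutonomousODE

variable {𝕜 : Type*} [NontriviallyNormedField 𝕜]

noncomputable def autonomousIterDerivPoly (p : 𝕜[X]) : ℕ → 𝕜[X]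
  | 0 => X
  | n + 1 => derivative (autonomousIterDerivPoly p n) * p

theorem iteratedDeriv_eventuallyEq_eval_autonomousIterDerivPoly {p : 𝕜[X]} {k : 𝕜 → 𝕜}
    {t : 𝕜} (h : ∀ᶠ u in 𝓝 t, HasDerivAt k (p.eval (k u)) u) (n : ℕ) :
    iteratedDeriv n k =ᶠ[𝓝 t] fun u => (autonomousIterDerivPoly p n).eval (k u) := by
  induction n with
  | zero => simp [autonomousIterDerivPoly]
  | succ n ih =>
    filter_upwards [ih.eventuallyEq_nhds, h] with u hu hk
    rw [iteratedDeriv_succ, hu.deriv_eq, autonomousIterDerivPoly, eval_mul]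
    exact ((Polynomial.hasDerivAt _ _).comp u hk).deriv

end AutonomousODE

theorem planeExtremalEq_of_riccati (ε b : ℝ) {k : ℝ → ℝ} {t : ℝ}
    (h : ∀ᶠ u in 𝓝 t, HasDerivAt k (6 * (b ^ 2 + ε) + b * k u - k u ^ 2 / 3) u) :
    PlaneExtremalEq ε k t := by
  generalize ha : 6 * (b ^ 2 + ε) = a at h
  set p : ℝ[X] := C a + C b * X - C (1 / 3) * X ^ 2
  have hp : ∀ᶠ u in 𝓝 t, HasDerivAt k (p.eval (k u)) u := by
    refine h.mono fun u hu => hu.congr_deriv ?_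
    simp only [p, eval_sub, eval_add, eval_mul, eval_C, eval_X, eval_pow]
    ring
  have hk (n : ℕ) := (iteratedDeriv_eventuallyEq_eval_autonomousIterDerivPoly hp n).self_of_nhds
  have hk1 := hk 1
  rw [iteratedDeriv_one] at hk1
  rw [PlaneExtremalEq, hk 3, hk 2, hk1]
  simp only [autonomousIterDerivPoly, p, derivative_X, derivative_add, derivative_sub,
    derivative_mul, derivative_C, derivative_X_pow, derivative_one, derivative_zero, eval_X,
    eval_C, eval_add, eval_sub, eval_mul, eval_pow, eval_zero, eval_one]
  linear_combination (a + b * k t - k t ^ 2 / 3) / 6 * ha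

theorem hasDerivAt_div_of_linear_second_order {f g : ℝ → ℝ} {σ x : ℝ}
    (hf : HasDerivAt f (σ * g x) x) (hg : HasDerivAt g (f x) x) (hgx : g x ≠ 0) :
    HasDerivAt (fun y => f y / g y) (σ - (f x / g x) ^ 2) x :=
  (hf.div hg hgx).congr_deriv (by field_simp)

theorem planeExtremalEq_of_rescale {ε c t : ℝ} {z : ℝ → ℝ}
    (hz : ∀ᶠ x in 𝓝 (√2 * (t - c)), HasDerivAt z (ε - z x ^ 2) x) :
    PlaneExtremalEq ε (fun u => 3 * √2 * z (√2 * (u - c))) t := by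
  have hlin (u : ℝ) : HasDerivAt (fun v => √2 * (v - c)) √2 u := by
    simpa using ((hasDerivAt_id u).sub_const c).const_mul √2
  apply planeExtremalEq_of_riccati ε 0
  filter_upwards [(hlin t).continuousAt.tendsto.eventually hz] with u hu
  refine ((hu.comp u (hlin u)).const_mul (3 * √2)).congr_deriv ?_
  linear_combination 3 * ε * Real.sq_sqrt (zero_le_two (α := ℝ))

theorem planeExtremalEq_add_three_div {s c t : ℝ} (hs : s ^ 2 = 2) (ht : t ≠ c) :
    PlaneExtremalEq (-1) (fun u => s + 3 / (u - c)) t := by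
  apply planeExtremalEq_of_riccati (-1) (2 * s / 3)
  filter_upwards [eventually_ne_nhds ht] with u hu
  have hne : u - c ≠ 0 := sub_ne_zero.2 hu
  have hd := ((hasDerivAt_const u (3 : ℝ)).div ((hasDerivAt_id' u).sub_const c) hne).const_add s
  refine hd.congr_deriv ?_
  field_simp
  linear_combination -27 * (u - c) ^ 2 * hs

/-- Explicit solutions of the plane extremal equation:
`3√2·tanh`, `3√2·coth` for `ε = 1`; `−3√2·tan`, `3√2·cot`, `±√2 + 3/(t−c)`
for `ε = −1`. -/
theorem stmt_8 (c : ℝ) :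
    (∀ t : ℝ, PlaneExtremalEq 1
      (fun u => 3 * Real.sqrt 2 * Real.tanh (Real.sqrt 2 * (u - c))) t) ∧
    (∀ t : ℝ, c < t → PlaneExtremalEq 1
      (fun u => 3 * Real.sqrt 2 *
        (Real.cosh (Real.sqrt 2 * (u - c)) / Real.sinh (Real.sqrt 2 * (u - c)))) t) ∧
    (∀ t : ℝ, Real.cos (Real.sqrt 2 * (t - c)) ≠ 0 → PlaneExtremalEq (-1)
      (fun u => -3 * Real.sqrt 2 * Real.tan (Real.sqrt 2 * (u - c))) t) ∧
    (∀ t : ℝ, Real.sin (Real.sqrt 2 * (t - c)) ≠ 0 → PlaneExtremalEq (-1)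
      (fun u => 3 * Real.sqrt 2 *
        (Real.cos (Real.sqrt 2 * (u - c)) / Real.sin (Real.sqrt 2 * (u - c)))) t) ∧
    (∀ t : ℝ, c < t → PlaneExtremalEq (-1)
      (fun u => Real.sqrt 2 + 3 / (u - c)) t) ∧
    (∀ t : ℝ, c < t → PlaneExtremalEq (-1)
      (fun u => -Real.sqrt 2 + 3 / (u - c)) t) := by
  refine ⟨fun t => ?tanh, fun t ht => ?coth, fun t ht => ?tan, fun t ht => ?cot,
    fun t ht => planeExtremalEq_add_three_div (Real.sq_sqrt zero_le_two) ht.ne',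
    fun t ht => planeExtremalEq_add_three_div (by simp) ht.ne'⟩
  case tanh =>
    simp only [Real.tanh_eq_sinh_div_cosh]
    exact planeExtremalEq_of_rescale (z := fun x => Real.sinh x / Real.cosh x) <|
      Eventually.of_forall fun x =>
        hasDerivAt_div_of_linear_second_order (by simpa using Real.hasDerivAt_sinh x)
          (Real.hasDerivAt_cosh x) (Real.cosh_pos x).ne'
  case coth =>
    have hpos : 0 < √2 * (t - c) := by positivity
    exact planeExtremalEq_of_rescale (z := fun x => Real.cosh x / Real.sinh x) <|
      (lt_mem_nhds hpos).mono fun x hx =>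
        hasDerivAt_div_of_linear_second_order (by simpa using Real.hasDerivAt_cosh x)
          (Real.hasDerivAt_sinh x) (Real.sinh_pos_iff.2 hx).ne'
  case tan =>
    have hfun : (fun u => -3 * √2 * Real.tan (√2 * (u - c)))
        = fun u => 3 * √2 * (-Real.sin (√2 * (u - c)) / Real.cos (√2 * (u - c))) := by
      ext u; rw [Real.tan_eq_sin_div_cos]; ring
    rw [hfun]
    exact planeExtremalEq_of_rescale (z := fun x => -Real.sin x / Real.cos x) <|
      (Real.continuous_cos.continuousAt.eventually_ne ht).mono fun x hx =>
        hasDerivAt_div_of_linear_second_order (by simpa using (Real.hasDerivAt_sin x).fun_neg)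
          (by simpa using Real.hasDerivAt_cos x) hx
  case cot =>
    exact planeExtremalEq_of_rescale (z := fun x => Real.cos x / Real.sin x) <|
      (Real.continuous_sin.continuousAt.eventually_ne ht).mono fun x hx =>
        hasDerivAt_div_of_linear_second_order (by simpa using Real.hasDerivAt_cos x)
          (Real.hasDerivAt_sin x) hx
end

section
/- Let ε ∈ {−1, 1}, let k : (0, ∞) → ℝ be continuous, and let s : (0, ∞) → ℝ be differentiable and satisfy the Abel equation of the first kind ε·s'(x) = (k(x)/(2·√(2x)))·s(x)² + s(x)³ for all x > 0. Define w : (0, ∞) → ℝ by w(x) := exp(−ε·∫₁ˣ s(u)² du). Then w is twice differentiable and satisfies x·w(x)²·(w'(x)² + w(x)·w''(x))² + ε·(k(x)²/2)·w(x)³·w'(x)³ = 0 for all x > 0. -/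
/-- A solution of the Abel equation of the first kind
`ε·s' = (k/(2√(2x)))·s² + s³` yields, via `w = exp(−ε·∫ s²)`, a solution of the
curvature equation `x·w²·((w')² + w·w'')² + ε·(k²/2)·w³·(w')³ = 0` of a graph
immersion. -/
theorem stmt_9 (ε : ℝ) (hε : ε = 1 ∨ ε = -1)
    (k : ℝ → ℝ) (hk : ContinuousOn k (Set.Ioi 0))
    (s : ℝ → ℝ) (hs : ∀ x ∈ Set.Ioi (0:ℝ), DifferentiableAt ℝ s x)
    (habel : ∀ x ∈ Set.Ioi (0:ℝ),
      ε * deriv s x = (k x / (2 * Real.sqrt (2 * x))) * (s x)^2 + (s x)^3)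
    (w : ℝ → ℝ) (hw : ∀ x, w x = Real.exp (-ε * ∫ u in (1:ℝ)..x, (s u)^2)) :
    (∀ x ∈ Set.Ioi (0:ℝ), DifferentiableAt ℝ w x ∧ DifferentiableAt ℝ (deriv w) x) ∧
    (∀ x ∈ Set.Ioi (0:ℝ),
      x * (w x)^2 * ((deriv w x)^2 + w x * iteratedDeriv 2 w x)^2
        + ε * ((k x)^2 / 2) * (w x)^3 * (deriv w x)^3 = 0) := by
  have hε2 : ε * ε = 1 := by rcases hε with rfl | rfl <;> norm_num
  have hwfun : w = fun y => Real.exp (-ε * ∫ u in (1:ℝ)..y, (s u)^2) := funext hw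
  have hs2c : ContinuousOn (fun u => (s u)^2) (Set.Ioi 0) := by
    intro x hx
    exact (((hs x hx).continuousAt).pow 2).continuousWithinAt
  -- first derivative
  have key : ∀ x ∈ Set.Ioi (0:ℝ), HasDerivAt w (-ε * (s x)^2 * w x) x := by
    intro x hx
    have hx0 : (0:ℝ) < x := hx
    have hsub : Set.uIcc (1:ℝ) x ⊆ Set.Ioi 0 := by
      intro y hy
      rcases Set.mem_uIcc.mp hy with ⟨h1, _⟩ | ⟨h1, _⟩ <;> simp only [Set.mem_Ioi] <;> linarith
    have hint : IntervalIntegrable (fun u => (s u)^2) MeasureTheory.volume 1 x :=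
      (hs2c.mono hsub).intervalIntegrable
    have hmeas : StronglyMeasurableAtFilter (fun u => (s u)^2) (nhds x) :=
      hs2c.stronglyMeasurableAtFilter isOpen_Ioi x hx
    have hca : ContinuousAt (fun u => (s u)^2) x := ((hs x hx).continuousAt).pow 2
    have hF : HasDerivAt (fun y => ∫ u in (1:ℝ)..y, (s u)^2) ((s x)^2) x :=
      intervalIntegral.integral_hasDerivAt_right hint hmeas hca
    have hE : HasDerivAt (fun y => Real.exp (-ε * ∫ u in (1:ℝ)..y, (s u)^2))
        (Real.exp (-ε * ∫ u in (1:ℝ)..x, (s u)^2) * (-ε * (s x)^2)) x :=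
      (hF.const_mul (-ε)).exp
    rw [hwfun]
    convert hE using 1
    rw [← hwfun, hw x]; ring
  have hD1 : ∀ x ∈ Set.Ioi (0:ℝ), deriv w x = -ε * (s x)^2 * w x :=
    fun x hx => (key x hx).deriv
  -- second derivative
  have key2 : ∀ x ∈ Set.Ioi (0:ℝ), HasDerivAt (deriv w)
      ((-ε * (2 * (s x)^1 * deriv s x)) * w x + (-ε * (s x)^2) * (-ε * (s x)^2 * w x)) x := by
    intro x hx
    have hg : HasDerivAt (fun y => -ε * (s y)^2 * w y)
        ((-ε * (2 * (s x)^1 * deriv s x)) * w x + (-ε * (s x)^2) * (-ε * (s x)^2 * w x)) x :=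
      ((((hs x hx).hasDerivAt).pow 2).const_mul (-ε)).mul (key x hx)
    refine hg.congr_of_eventuallyEq ?_
    filter_upwards [isOpen_Ioi.mem_nhds hx] with y hy using hD1 y hy
  constructor
  · exact fun x hx => ⟨(key x hx).differentiableAt, (key2 x hx).differentiableAt⟩
  · intro x hx
    have hx0 : (0:ℝ) < x := hx
    have hD2 : iteratedDeriv 2 w x
        = (-ε * (2 * (s x)^1 * deriv s x)) * w x + (-ε * (s x)^2) * (-ε * (s x)^2 * w x) := by
      rw [show (2:ℕ) = 1 + 1 by norm_num, iteratedDeriv_succ, iteratedDeriv_one]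
      exact (key2 x hx).deriv
    set r := Real.sqrt (2 * x) with hrdef
    have hr2 : r ^ 2 = 2 * x := Real.sq_sqrt (by linarith)
    have hr : r ≠ 0 := by
      have : 0 < r := Real.sqrt_pos.mpr (by linarith)
      linarith
    have habel' : deriv s x = ε * ((k x / (2 * r)) * (s x)^2 + (s x)^3) := by
      have h := habel x hx
      have : ε * (ε * deriv s x) = ε * ((k x / (2 * r)) * (s x)^2 + (s x)^3) := by
        rw [h]
      calc deriv s x = ε * ε * deriv s x := by rw [hε2]; ring
        _ = ε * ((k x / (2 * r)) * (s x)^2 + (s x)^3) := by rw [mul_assoc, this]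
    have hmid : (deriv w x)^2 + w x * iteratedDeriv 2 w x
        = -((w x)^2 * k x * (s x)^3) / r := by
      rw [hD1 x hx, hD2, habel']
      field_simp
      rcases hε with rfl | rfl <;> ring
    rw [hmid, hD1 x hx]
    have hsq : (-((w x)^2 * k x * (s x)^3) / r)^2
        = ((w x)^2 * k x * (s x)^3)^2 / (2 * x) := by
      rw [div_pow, hr2]; ring
    rw [hsq]
    have hx' : x ≠ 0 := ne_of_gt hx0
    field_simp
    rcases hε with rfl | rfl <;> ring
end

section
/- Let ε ∈ {−1, 1}, let k : (0, ∞) → ℝ be continuous, and let s : (0, ∞) → ℝ be differentiable, nowhere zero, and satisfy the Abel equation of the second kind s(x)·s'(x) = (k(x)/(2·√(2x)))·s(x) − ε for all x > 0. Define w : (0, ∞) → ℝ by w(x) := exp(−ε·∫₁ˣ s(u)^{−2} du). Then w is twice differentiable and satisfies x·w(x)²·(w'(x)² + w(x)·w''(x))² + ε·(k(x)²/2)·w(x)³·w'(x)³ = 0 for all x > 0. -/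
/-!
Writing `w = exp (-ε G)` with `G' = s⁻²`, we get `w' = -ε w / s²` and
`w'² + w w'' = (2 ε w² / s⁴) (ε + s s')`. The Abel equation turns `ε + s s'` into
`k s / (2 √(2x))`, so `w'² + w w'' = ε k w² / (√(2x) s³)`; squaring makes `√(2x)` disappear,
and the curvature equation reduces to `ε² = 1`.
-/

open Set Filter Topology

theorem hasDerivAt_exp_const_mul_integral {U : Set ℝ} (hU : IsOpen U) {g : ℝ → ℝ}
    (hg : ContinuousOn g U) {a x : ℝ} (hax : uIcc a x ⊆ U) (c : ℝ) :
    HasDerivAt (fun y => Real.exp (c * ∫ u in a..y, g u))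
      (c * g x * Real.exp (c * ∫ u in a..x, g u)) x := by
  have hx : x ∈ U := hax right_mem_uIcc
  have hG : HasDerivAt (fun y => ∫ u in a..y, g u) (g x) x :=
    intervalIntegral.integral_hasDerivAt_right ((hg.mono hax).intervalIntegrable)
      (hg.stronglyMeasurableAtFilter hU x hx) (hg.continuousAt (hU.mem_nhds hx))
  simpa only [mul_comm, mul_left_comm] using (hG.const_mul c).exp

theorem hasDerivAt_deriv_of_hasDerivAt_mul_self {U : Set ℝ} (hU : IsOpen U) {w h : ℝ → ℝ}
    (hw : ∀ y ∈ U, HasDerivAt w (h y * w y) y) {x h' : ℝ} (hx : x ∈ U)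
    (hh : HasDerivAt h h' x) :
    HasDerivAt (deriv w) (h' * w x + h x * (h x * w x)) x := by
  have hderiv : deriv w =ᶠ[𝓝 x] fun y => h y * w y := by
    filter_upwards [hU.mem_nhds hx] with y hy using (hw y hy).deriv
  exact (hh.mul (hw x hx)).congr_of_eventuallyEq hderiv

theorem hasDerivAt_inv_sq {s : ℝ → ℝ} {x s' : ℝ} (hs : HasDerivAt s s' x) (hs0 : s x ≠ 0) :
    HasDerivAt (fun y => ((s y) ^ 2)⁻¹) (-(2 * s x * s') / ((s x) ^ 2) ^ 2) x := by
  simpa [mul_comm, mul_assoc] using (hs.fun_pow 2).fun_inv (pow_ne_zero 2 hs0)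

section Algebra

variable {ε x r k s s' w w' w'' : ℝ}

theorem sq_add_mul_eq_of_abel (hs : s ≠ 0) (habel : s * s' = k / (2 * r) * s - ε)
    (hw' : w' = -ε * (s ^ 2)⁻¹ * w)
    (hw'' : w'' = -ε * (-(2 * s * s') / (s ^ 2) ^ 2) * w + -ε * (s ^ 2)⁻¹ * w') :
    w' ^ 2 + w * w'' = ε * k * w ^ 2 / (r * s ^ 3) := by
  have hss' : s' = (k / (2 * r) * s - ε) / s := by
    rw [← habel]; field_simp
  subst hw'' hw' hss'
  field_simp
  ring

theorem curvature_eq_zero_of_abel (hε : ε ^ 2 = 1) (hx : x ≠ 0) (hr : r ^ 2 = 2 * x)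
    (hs : s ≠ 0) (habel : s * s' = k / (2 * r) * s - ε) (hw' : w' = -ε * (s ^ 2)⁻¹ * w)
    (hw'' : w'' = -ε * (-(2 * s * s') / (s ^ 2) ^ 2) * w + -ε * (s ^ 2)⁻¹ * w') :
    x * w ^ 2 * (w' ^ 2 + w * w'') ^ 2 + ε * (k ^ 2 / 2) * w ^ 3 * w' ^ 3 = 0 := by
  rw [sq_add_mul_eq_of_abel hs habel hw' hw'', hw', div_pow, mul_pow r, hr]
  field_simp
  linear_combination (-w ^ 6 * ε ^ 2 * k ^ 2) * hε

end Algebra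

theorem stmt_10_general (ε : ℝ) (hε : ε = 1 ∨ ε = -1)
    (k : ℝ → ℝ)
    (s : ℝ → ℝ) (hs : ∀ x ∈ Set.Ioi (0:ℝ), DifferentiableAt ℝ s x)
    (hs0 : ∀ x ∈ Set.Ioi (0:ℝ), s x ≠ 0)
    (habel : ∀ x ∈ Set.Ioi (0:ℝ),
      s x * deriv s x = (k x / (2 * Real.sqrt (2 * x))) * s x - ε)
    (w : ℝ → ℝ) (hw : ∀ x, w x = Real.exp (-ε * ∫ u in (1:ℝ)..x, ((s u)^2)⁻¹)) :
    (∀ x ∈ Set.Ioi (0:ℝ), DifferentiableAt ℝ w x ∧ DifferentiableAt ℝ (deriv w) x) ∧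
    (∀ x ∈ Set.Ioi (0:ℝ),
      x * (w x)^2 * ((deriv w x)^2 + w x * iteratedDeriv 2 w x)^2
        + ε * ((k x)^2 / 2) * (w x)^3 * (deriv w x)^3 = 0) := by
  obtain rfl : w = _ := funext hw
  have hg (x) (hx : x ∈ Ioi (0:ℝ)) := hasDerivAt_inv_sq (hs x hx).hasDerivAt (hs0 x hx)
  have hw' (x) (hx : x ∈ Ioi (0:ℝ)) := hasDerivAt_exp_const_mul_integral isOpen_Ioi
    (fun y hy => (hg y hy).continuousAt.continuousWithinAt)
    (ordConnected_Ioi.uIcc_subset (mem_Ioi.mpr one_pos) hx) (-ε)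
  have hw'' (x) (hx : x ∈ Ioi (0:ℝ)) :=
    hasDerivAt_deriv_of_hasDerivAt_mul_self isOpen_Ioi hw' hx ((hg x hx).const_mul (-ε))
  refine ⟨fun x hx => ⟨(hw' x hx).differentiableAt, (hw'' x hx).differentiableAt⟩,
    fun x hx => ?_⟩
  rw [iteratedDeriv_succ, iteratedDeriv_one, (hw'' x hx).deriv, (hw' x hx).deriv]
  have hx0 : 0 < x := hx
  exact curvature_eq_zero_of_abel (by rcases hε with rfl | rfl <;> norm_num) hx0.ne'
    (Real.sq_sqrt (by positivity)) (hs0 x hx) (habel x hx) rfl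
    (by ring)

/-- A nowhere-vanishing solution of the Abel equation of the second kind
`s·s' = (k/(2√(2x)))·s − ε` yields, via `w = exp(−ε·∫ s⁻²)`, a solution of the
curvature equation `x·w²·((w')² + w·w'')² + ε·(k²/2)·w³·(w')³ = 0` of a graph
immersion. -/
theorem stmt_10 (ε : ℝ) (hε : ε = 1 ∨ ε = -1)
    (k : ℝ → ℝ) (hk : ContinuousOn k (Set.Ioi 0))
    (s : ℝ → ℝ) (hs : ∀ x ∈ Set.Ioi (0:ℝ), DifferentiableAt ℝ s x)
    (hs0 : ∀ x ∈ Set.Ioi (0:ℝ), s x ≠ 0)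
    (habel : ∀ x ∈ Set.Ioi (0:ℝ),
      s x * deriv s x = (k x / (2 * Real.sqrt (2 * x))) * s x - ε)
    (w : ℝ → ℝ) (hw : ∀ x, w x = Real.exp (-ε * ∫ u in (1:ℝ)..x, ((s u)^2)⁻¹)) :
    (∀ x ∈ Set.Ioi (0:ℝ), DifferentiableAt ℝ w x ∧ DifferentiableAt ℝ (deriv w) x) ∧
    (∀ x ∈ Set.Ioi (0:ℝ),
      x * (w x)^2 * ((deriv w x)^2 + w x * iteratedDeriv 2 w x)^2
        + ε * ((k x)^2 / 2) * (w x)^3 * (deriv w x)^3 = 0) :=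
  stmt_10_general ε hε k s hs hs0 habel w hw
end

section
/- Let ε ∈ {−1, 1}, let k : ℝ → ℝ be twice continuously differentiable, let M : ℝ → ℝ be continuous, and let x, E₁, E₂, E₃ : ℝ → ℝ³ be smooth maps satisfying the space general-affine Frenet system: x' = E₁, E₁' = −(1/2)k·E₁ + E₂, E₂' = −k·E₂ + E₃, E₃' = −M·E₁ − ε·E₂ − (3/2)k·E₃. Then x satisfies the general-affine space curve equation x'''' + 3k·x''' + (2k' + (11/4)k² + ε)·x'' + (M + (1/2)ε·k + (1/2)k'' + (7/4)k·k' + (3/4)k³)·x' = 0 identically. -/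
/-- The space general-affine Frenet system implies the fourth order
general-affine space curve equation. -/
theorem stmt_11 (ε : ℝ) (hε : ε = 1 ∨ ε = -1)
    (k : ℝ → ℝ) (hk : ContDiff ℝ 2 k) (M : ℝ → ℝ) (hM : Continuous M)
    (x E₁ E₂ E₃ : ℝ → Fin 3 → ℝ)
    (hx : ContDiff ℝ (⊤ : ℕ∞) x) (h1 : ContDiff ℝ (⊤ : ℕ∞) E₁) (h2 : ContDiff ℝ (⊤ : ℕ∞) E₂)
    (h3 : ContDiff ℝ (⊤ : ℕ∞) E₃)
    (hxE : ∀ t, deriv x t = E₁ t)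
    (hE₁ : ∀ t, deriv E₁ t = (-(1/2) * k t) • E₁ t + E₂ t)
    (hE₂ : ∀ t, deriv E₂ t = (-(k t)) • E₂ t + E₃ t)
    (hE₃ : ∀ t, deriv E₃ t = (-(M t)) • E₁ t - ε • E₂ t - ((3/2) * k t) • E₃ t) :
    ∀ t, iteratedDeriv 4 x t + (3 * k t) • iteratedDeriv 3 x t
      + (2 * deriv k t + (11/4) * (k t)^2 + ε) • iteratedDeriv 2 x t
      + (M t + (1/2) * ε * k t + (1/2) * iteratedDeriv 2 k t
          + (7/4) * k t * deriv k t + (3/4) * (k t)^3) • deriv x t = 0 := by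
  have hk' : ContDiff ℝ 1 (deriv k) := by
    have h2 : ContDiff ℝ (1+1) k := by exact_mod_cast hk
    exact (contDiff_succ_iff_deriv.mp h2).2.2
  have dk : ∀ t, HasDerivAt k (deriv k t) t :=
    fun t => (hk.differentiable (by norm_num) t).hasDerivAt
  have dk' : ∀ t, HasDerivAt (deriv k) (deriv (deriv k) t) t :=
    fun t => (hk'.differentiable (by norm_num) t).hasDerivAt
  have dE₁ : ∀ t, HasDerivAt E₁ ((-(1/2) * k t) • E₁ t + E₂ t) t :=
    fun t => hE₁ t ▸ (h1.differentiable (by simp) t).hasDerivAt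
  have dE₂ : ∀ t, HasDerivAt E₂ ((-(k t)) • E₂ t + E₃ t) t :=
    fun t => hE₂ t ▸ (h2.differentiable (by simp) t).hasDerivAt
  have dE₃ : ∀ t, HasDerivAt E₃ ((-(M t)) • E₁ t - ε • E₂ t - ((3/2) * k t) • E₃ t) t :=
    fun t => hE₃ t ▸ (h3.differentiable (by simp) t).hasDerivAt
  have hdx : deriv x = E₁ := funext hxE
  have i2 : iteratedDeriv 2 x = deriv (deriv x) := by
    have h : iteratedDeriv 2 x = deriv (iteratedDeriv 1 x) := iteratedDeriv_succ
    rw [h, iteratedDeriv_one]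
  have i3 : iteratedDeriv 3 x = deriv (iteratedDeriv 2 x) := iteratedDeriv_succ
  have i4 : iteratedDeriv 4 x = deriv (iteratedDeriv 3 x) := iteratedDeriv_succ
  have ik2 : iteratedDeriv 2 k = deriv (deriv k) := by
    have h : iteratedDeriv 2 k = deriv (iteratedDeriv 1 k) := iteratedDeriv_succ
    rw [h, iteratedDeriv_one]
  have h2fun : iteratedDeriv 2 x = fun t => (-(1/2) * k t) • E₁ t + E₂ t := by
    rw [i2, hdx]; exact funext hE₁
  have h3fun : iteratedDeriv 3 x = fun t =>
      (-(1/2) * deriv k t + (1/4) * (k t)^2) • E₁ t + (-(3/2) * k t) • E₂ t + E₃ t := by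
    rw [i3, h2fun]
    funext t
    have H := (((dk t).const_mul (-(1/2))).smul (dE₁ t)).add (dE₂ t)
    erw [H.deriv]
    module
  have h4fun : iteratedDeriv 4 x = fun t =>
      (-(1/2) * deriv (deriv k) t + (3/4) * k t * deriv k t - (1/8) * (k t)^3 - M t) • E₁ t
      + (-2 * deriv k t + (7/4) * (k t)^2 - ε) • E₂ t + (-3 * k t) • E₃ t := by
    rw [i4, h3fun]
    funext t
    have hc : HasDerivAt (fun s => -(1/2) * deriv k s + (1/4) * (k s)^2)
        (-(1/2) * deriv (deriv k) t + (1/4) * ((2:ℕ) * k t ^ 1 * deriv k t)) t :=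
      ((dk' t).const_mul (-(1/2))).add (((dk t).pow 2).const_mul (1/4))
    have H := ((hc.smul (dE₁ t)).add (((dk t).const_mul (-(3/2))).smul (dE₂ t))).add (dE₃ t)
    erw [H.deriv]
    push_cast
    module
  intro t
  rw [h2fun, h3fun, h4fun, hdx, ik2]
  simp only
  module
end

section
/- Let ε ∈ {−1, 1}, let L > 0, let k, M : ℝ → ℝ be continuous, and let E₁, E₂, E₃ : ℝ → ℝ³ be continuously differentiable maps satisfying E₁' = −(1/2)k·E₁ + E₂, E₂' = −k·E₂ + E₃, E₃' = −M·E₁ − ε·E₂ − (3/2)k·E₃, such that det(E₁(t), E₂(t), E₃(t)) ≠ 0 for all t and such that k, M, E₁, E₂, E₃ are all L-periodic. Then ∫₀ᴸ k(t) dt = 0; moreover there exist t₁, t₂ ∈ [0, L) with t₁ ≠ t₂ and k(t₁) = k(t₂) = 0. -/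
/-!
Along the frame, `D = det(E₁, E₂, E₃)` solves the scalar linear equation `D' = -3 k D`
(the trace of the frame matrix is `-k/2 - k - 3k/2`), so `D · exp(3 ∫₀ᵗ k)` is constant.
Periodicity of the frame gives `D(L) = D(0) ≠ 0`, hence `exp(3 ∫₀ᴸ k) = 1`. Consequently the
primitive `t ↦ ∫₀ᵗ k` is itself `L`-periodic, and Rolle's theorem, applied on `[0, L]` and then
on a period starting at the first zero, produces two distinct zeros of `k` per period.
-/

open Set Function

theorem HasDerivAt.det_fin_three {𝕜 : Type*} [NontriviallyNormedField 𝕜]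
    {E₁ E₂ E₃ : 𝕜 → Fin 3 → 𝕜} {E₁' E₂' E₃' : Fin 3 → 𝕜} {t : 𝕜}
    (h₁ : HasDerivAt E₁ E₁' t) (h₂ : HasDerivAt E₂ E₂' t) (h₃ : HasDerivAt E₃ E₃' t) :
    HasDerivAt (fun s => (Matrix.of ![E₁ s, E₂ s, E₃ s]).det)
      ((Matrix.of ![E₁', E₂ t, E₃ t]).det + (Matrix.of ![E₁ t, E₂', E₃ t]).det +
        (Matrix.of ![E₁ t, E₂ t, E₃']).det) t := by
  have c₁ := hasDerivAt_pi.1 h₁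
  have c₂ := hasDerivAt_pi.1 h₂
  have c₃ := hasDerivAt_pi.1 h₃
  simp only [Matrix.det_fin_three, Matrix.of_apply, Matrix.cons_val_zero, Matrix.cons_val_one,
    Matrix.cons_val_two, Matrix.head_cons, Matrix.tail_cons]
  exact (((((((c₁ 0).mul (c₂ 1)).mul (c₃ 2)).sub (((c₁ 0).mul (c₂ 2)).mul (c₃ 1))).sub
    (((c₁ 1).mul (c₂ 0)).mul (c₃ 2))).add (((c₁ 1).mul (c₂ 2)).mul (c₃ 0))).add
    (((c₁ 2).mul (c₂ 0)).mul (c₃ 1))).sub (((c₁ 2).mul (c₂ 1)).mul (c₃ 0)) |>.congr_deriv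
    (by simp only [Pi.mul_apply]; ring)

theorem hasDerivAt_det_frame {ε : ℝ} {k M : ℝ → ℝ} {E₁ E₂ E₃ : ℝ → Fin 3 → ℝ} {t : ℝ}
    (h₁ : HasDerivAt E₁ ((-(1/2) * k t) • E₁ t + E₂ t) t)
    (h₂ : HasDerivAt E₂ ((-(k t)) • E₂ t + E₃ t) t)
    (h₃ : HasDerivAt E₃ ((-(M t)) • E₁ t - ε • E₂ t - ((3/2) * k t) • E₃ t) t) :
    HasDerivAt (fun s => (Matrix.of ![E₁ s, E₂ s, E₃ s]).det)
      (-3 * k t * (Matrix.of ![E₁ t, E₂ t, E₃ t]).det) t :=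
  (h₁.det_fin_three h₂ h₃).congr_deriv (by simp [Matrix.det_fin_three]; ring)

theorem eq_of_hasDerivAt_mul_self {D g g' : ℝ → ℝ} {a b : ℝ}
    (hg : ∀ t, HasDerivAt g (g' t) t) (hD : ∀ t, HasDerivAt D (g' t * D t) t)
    (hDab : D a = D b) (hDa : D a ≠ 0) : g a = g b := by
  have hF : ∀ t, HasDerivAt (fun s => D s * Real.exp (-g s)) 0 t := fun t =>
    ((hD t).mul (hg t).neg.exp).congr_deriv (by ring)
  have hFab : D a * Real.exp (-g a) = D b * Real.exp (-g b) :=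
    is_const_of_deriv_eq_zero (fun t => (hF t).differentiableAt) (fun t => (hF t).deriv) a b
  rw [← hDab] at hFab
  simpa using mul_left_cancel₀ hDa hFab

theorem Function.Periodic.exists_ne_mem_Ico_hasDerivAt_eq_zero {f f' : ℝ → ℝ} {L : ℝ}
    (hL : 0 < L) (hf : Periodic f L) (hf' : Periodic f' L) (hd : ∀ t, HasDerivAt f (f' t) t) :
    ∃ t₁ t₂, t₁ ∈ Ico 0 L ∧ t₂ ∈ Ico 0 L ∧ t₁ ≠ t₂ ∧ f' t₁ = 0 ∧ f' t₂ = 0 := by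
  have rolle : ∀ a, ∃ c ∈ Ioo a (a + L), f' c = 0 := fun a =>
    exists_hasDerivAt_eq_zero (by linarith) (fun x _ => (hd x).continuousAt.continuousWithinAt)
      (hf a).symm fun x _ => hd x
  obtain ⟨t₁, ⟨ht₁0, ht₁L⟩, hft₁⟩ := rolle 0
  obtain ⟨t₂, ⟨ht₁t₂, ht₂⟩, hft₂⟩ := rolle t₁
  rw [zero_add] at ht₁L
  rcases lt_or_ge t₂ L with ht₂L | hLt₂
  · exact ⟨t₁, t₂, ⟨ht₁0.le, ht₁L⟩, ⟨by linarith, ht₂L⟩, ht₁t₂.ne, hft₁, hft₂⟩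
  · exact ⟨t₁, t₂ - L, ⟨ht₁0.le, ht₁L⟩, ⟨by linarith, by linarith⟩, by linarith,
      hft₁, (hf'.sub_eq t₂).trans hft₂⟩

theorem stmt_13_general (ε : ℝ) (L : ℝ) (hL : 0 < L)
    (k M : ℝ → ℝ) (hk : Continuous k)
    (E₁ E₂ E₃ : ℝ → Fin 3 → ℝ)
    (h1 : ContDiff ℝ 1 E₁) (h2 : ContDiff ℝ 1 E₂) (h3 : ContDiff ℝ 1 E₃)
    (hE₁ : ∀ t, deriv E₁ t = (-(1/2) * k t) • E₁ t + E₂ t)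
    (hE₂ : ∀ t, deriv E₂ t = (-(k t)) • E₂ t + E₃ t)
    (hE₃ : ∀ t, deriv E₃ t = (-(M t)) • E₁ t - ε • E₂ t - ((3/2) * k t) • E₃ t)
    (hdet : ∀ t, (Matrix.of ![E₁ t, E₂ t, E₃ t]).det ≠ 0)
    (hkp : Function.Periodic k L)
    (hE₁p : Function.Periodic E₁ L) (hE₂p : Function.Periodic E₂ L)
    (hE₃p : Function.Periodic E₃ L) :
    (∫ t in (0:ℝ)..L, k t) = 0 ∧
    ∃ t₁ t₂ : ℝ, t₁ ∈ Set.Ico (0:ℝ) L ∧ t₂ ∈ Set.Ico (0:ℝ) L ∧ t₁ ≠ t₂ ∧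
      k t₁ = 0 ∧ k t₂ = 0 := by
  set K : ℝ → ℝ := fun t => ∫ u in (0:ℝ)..t, k u with hK
  have hKd : ∀ t, HasDerivAt K (k t) t := fun t => (hk.integral_hasStrictDerivAt 0 t).hasDerivAt
  have hD : ∀ t, HasDerivAt (fun s => (Matrix.of ![E₁ s, E₂ s, E₃ s]).det)
      (-3 * k t * (Matrix.of ![E₁ t, E₂ t, E₃ t]).det) t := fun t =>
    hasDerivAt_det_frame (hE₁ t ▸ (h1.differentiable one_ne_zero t).hasDerivAt)
      (hE₂ t ▸ (h2.differentiable one_ne_zero t).hasDerivAt)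
      (hE₃ t ▸ (h3.differentiable one_ne_zero t).hasDerivAt)
  have hKL : K L = 0 := by
    have h := eq_of_hasDerivAt_mul_self (a := 0) (b := L) (fun t => (hKd t).const_mul (-3)) hD
      (by simp only [← hE₁p 0, ← hE₂p 0, ← hE₃p 0, zero_add]) (hdet 0)
    simpa [hK] using h.symm
  have hKp : Periodic K L := fun t => by
    simp only [hK, hkp.intervalIntegral_add_eq_add 0 t fun _ _ => hk.intervalIntegrable _ _]
    simpa [hK] using hKL
  exact ⟨hKL, hKp.exists_ne_mem_Ico_hasDerivAt_eq_zero hL hkp hKd⟩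

/-- A closed nondegenerate space curve without affine inflection point has
vanishing total first general-affine curvature, hence at least two zeros of
`k` in a period. -/
theorem stmt_13 (ε : ℝ) (hε : ε = 1 ∨ ε = -1) (L : ℝ) (hL : 0 < L)
    (k M : ℝ → ℝ) (hk : Continuous k) (hM : Continuous M)
    (E₁ E₂ E₃ : ℝ → Fin 3 → ℝ)
    (h1 : ContDiff ℝ 1 E₁) (h2 : ContDiff ℝ 1 E₂) (h3 : ContDiff ℝ 1 E₃)
    (hE₁ : ∀ t, deriv E₁ t = (-(1/2) * k t) • E₁ t + E₂ t)
    (hE₂ : ∀ t, deriv E₂ t = (-(k t)) • E₂ t + E₃ t)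
    (hE₃ : ∀ t, deriv E₃ t = (-(M t)) • E₁ t - ε • E₂ t - ((3/2) * k t) • E₃ t)
    (hdet : ∀ t, (Matrix.of ![E₁ t, E₂ t, E₃ t]).det ≠ 0)
    (hkp : Function.Periodic k L) (hMp : Function.Periodic M L)
    (hE₁p : Function.Periodic E₁ L) (hE₂p : Function.Periodic E₂ L)
    (hE₃p : Function.Periodic E₃ L) :
    (∫ t in (0:ℝ)..L, k t) = 0 ∧
    ∃ t₁ t₂ : ℝ, t₁ ∈ Set.Ico (0:ℝ) L ∧ t₂ ∈ Set.Ico (0:ℝ) L ∧ t₁ ≠ t₂ ∧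
      k t₁ = 0 ∧ k t₂ = 0 :=
  stmt_13_general ε L hL k M hk E₁ E₂ E₃ h1 h2 h3 hE₁ hE₂ hE₃ hdet hkp hE₁p hE₂p hE₃p
end

section
/- Let y : ℝ → ℝ³ be smooth, let σ : ℝ → ℝ be smooth with σ'(t) > 0 for all t, set x := y ∘ σ, and suppose x'''' = a·x''' + b·x'' + c·x' for smooth functions a, b, c : ℝ → ℝ. Define A := (a − 6σ''/σ')·(1/σ'), B := (b + 3a·σ''/σ' − 3(σ''/σ')² − 4σ'''/σ')·(1/σ'²), C := (c + b·σ''/σ' + a·σ'''/σ' − σ''''/σ')·(1/σ'³). Then: (i) for all t, y''''(σ(t)) = A(t)·y'''(σ(t)) + B(t)·y''(σ(t)) + C(t)·y'(σ(t)); (ii) B − (2/3)·A'/σ' + (11/36)A² = (b − (2/3)a' + (11/36)a²)·(1/σ'²); and (iii) C − (1/6)·(A'/σ')'/σ' + (7/36)·A·(A'/σ') − (1/36)A³ = (c − (1/6)a'' + (7/36)a·a' − (1/36)a³)·(1/σ'³) + (b − (2/3)a' + (11/36)a²)·σ''/σ'⁴. -/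
set_option maxHeartbeats 1000000

private lemma aux_contDiff {E : Type*} [NormedAddCommGroup E] [NormedSpace ℝ E]
    {f : ℝ → E} (hf : ContDiff ℝ (⊤ : ℕ∞) f) : ∀ n, ContDiff ℝ (⊤ : ℕ∞) (iteratedDeriv n f) := by
  intro n
  induction n with
  | zero => simpa using hf.of_le (by simp)
  | succ k ih => rw [iteratedDeriv_succ]; exact (contDiff_infty_iff_deriv.mp ih).2

private lemma aux_hd {E : Type*} [NormedAddCommGroup E] [NormedSpace ℝ E]
    {f : ℝ → E} (hf : ContDiff ℝ (⊤ : ℕ∞) f) (n : ℕ) (t : ℝ) :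
    HasDerivAt (iteratedDeriv n f) (iteratedDeriv (n + 1) f t) t := by
  rw [iteratedDeriv_succ]
  exact (((aux_contDiff hf n).differentiable (by simp)) t).hasDerivAt

/-- Change-of-parameter formulas for the fourth order ODE of a space curve and
the two covariance relations for the differential polynomials in the
coefficients. -/
theorem stmt_14 (y : ℝ → Fin 3 → ℝ) (σ a b c : ℝ → ℝ)
    (hy : ContDiff ℝ (⊤ : ℕ∞) y) (hσ : ContDiff ℝ (⊤ : ℕ∞) σ) (hσ' : ∀ t, 0 < deriv σ t)
    (ha : ContDiff ℝ (⊤ : ℕ∞) a) (hb : ContDiff ℝ (⊤ : ℕ∞) b) (hc : ContDiff ℝ (⊤ : ℕ∞) c)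
    (hode : ∀ t, iteratedDeriv 4 (y ∘ σ) t
      = a t • iteratedDeriv 3 (y ∘ σ) t + b t • iteratedDeriv 2 (y ∘ σ) t
        + c t • deriv (y ∘ σ) t)
    (A B C : ℝ → ℝ)
    (hA : ∀ t, A t = (a t - 6 * iteratedDeriv 2 σ t / deriv σ t) * (1 / deriv σ t))
    (hB : ∀ t, B t = (b t + 3 * a t * iteratedDeriv 2 σ t / deriv σ t
      - 3 * (iteratedDeriv 2 σ t / deriv σ t)^2
      - 4 * iteratedDeriv 3 σ t / deriv σ t) * (1 / (deriv σ t)^2))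
    (hC : ∀ t, C t = (c t + b t * iteratedDeriv 2 σ t / deriv σ t
      + a t * iteratedDeriv 3 σ t / deriv σ t
      - iteratedDeriv 4 σ t / deriv σ t) * (1 / (deriv σ t)^3)) :
    (∀ t, iteratedDeriv 4 y (σ t) = A t • iteratedDeriv 3 y (σ t)
      + B t • iteratedDeriv 2 y (σ t) + C t • deriv y (σ t)) ∧
    (∀ t, B t - (2/3) * deriv A t / deriv σ t + (11/36) * (A t)^2
      = (b t - (2/3) * deriv a t + (11/36) * (a t)^2) * (1 / (deriv σ t)^2)) ∧
    (∀ t, C t - (1/6) * (deriv (fun u => deriv A u / deriv σ u) t) / deriv σ t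
        + (7/36) * A t * (deriv A t / deriv σ t) - (1/36) * (A t)^3
      = (c t - (1/6) * iteratedDeriv 2 a t + (7/36) * a t * deriv a t
          - (1/36) * (a t)^3) * (1 / (deriv σ t)^3)
        + (b t - (2/3) * deriv a t + (11/36) * (a t)^2)
          * iteratedDeriv 2 σ t / (deriv σ t)^4) := by
  have hds : ∀ t, HasDerivAt σ (deriv σ t) t :=
    fun t => ((hσ.differentiable (by simp)) t).hasDerivAt
  have hd1 : ∀ t, HasDerivAt (deriv σ) (iteratedDeriv 2 σ t) t := by
    intro t
    have h := aux_hd hσ 1 t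
    rwa [iteratedDeriv_one] at h
  have hd2 : ∀ t, HasDerivAt (iteratedDeriv 2 σ) (iteratedDeriv 3 σ t) t := aux_hd hσ 2
  have hd3 : ∀ t, HasDerivAt (iteratedDeriv 3 σ) (iteratedDeriv 4 σ t) t := aux_hd hσ 3
  have hda : ∀ t, HasDerivAt a (deriv a t) t :=
    fun t => ((ha.differentiable (by simp)) t).hasDerivAt
  have hda1 : ∀ t, HasDerivAt (deriv a) (iteratedDeriv 2 a t) t := by
    intro t
    have h := aux_hd ha 1 t
    rwa [iteratedDeriv_one] at h
  have hcomp : ∀ (n : ℕ) (t : ℝ), HasDerivAt (fun u => iteratedDeriv n y (σ u))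
      (deriv σ t • iteratedDeriv (n + 1) y (σ t)) t :=
    fun n t => (aux_hd hy n (σ t)).scomp t (hds t)
  -- derivatives of the composite
  have e1 : deriv (y ∘ σ) = fun t => deriv σ t • iteratedDeriv 1 y (σ t) := by
    funext t
    have h : HasDerivAt (y ∘ σ) (deriv σ t • iteratedDeriv 1 y (σ t)) t := by
      simpa [Function.comp_def] using hcomp 0 t
    exact h.deriv
  have e2 : iteratedDeriv 2 (y ∘ σ) = fun t =>
      (deriv σ t ^ 2) • iteratedDeriv 2 y (σ t)
        + iteratedDeriv 2 σ t • iteratedDeriv 1 y (σ t) := by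
    funext t
    have h := (hd1 t).smul (hcomp 1 t)
    rw [show (2:ℕ) = 1 + 1 from rfl, iteratedDeriv_succ, iteratedDeriv_one, e1]
    refine (h.deriv).trans ?_
    module
  have e3 : iteratedDeriv 3 (y ∘ σ) = fun t =>
      (deriv σ t ^ 3) • iteratedDeriv 3 y (σ t)
        + (3 * deriv σ t * iteratedDeriv 2 σ t) • iteratedDeriv 2 y (σ t)
        + iteratedDeriv 3 σ t • iteratedDeriv 1 y (σ t) := by
    funext t
    have h := (((hd1 t).pow 2).smul (hcomp 2 t)).add ((hd2 t).smul (hcomp 1 t))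
    have hsucc : iteratedDeriv 3 (y ∘ σ) = deriv (iteratedDeriv 2 (y ∘ σ)) := iteratedDeriv_succ
    rw [hsucc, e2]
    refine (h.deriv).trans ?_
    simp only [Pi.pow_apply]
    module
  have e4 : ∀ t, iteratedDeriv 4 (y ∘ σ) t =
      (deriv σ t ^ 4) • iteratedDeriv 4 y (σ t)
        + (6 * deriv σ t ^ 2 * iteratedDeriv 2 σ t) • iteratedDeriv 3 y (σ t)
        + (4 * deriv σ t * iteratedDeriv 3 σ t + 3 * iteratedDeriv 2 σ t ^ 2)
            • iteratedDeriv 2 y (σ t)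
        + iteratedDeriv 4 σ t • iteratedDeriv 1 y (σ t) := by
    intro t
    have h := ((((hd1 t).pow 3).smul (hcomp 3 t)).add
        ((((hasDerivAt_const t (3:ℝ)).mul (hd1 t)).mul (hd2 t)).smul (hcomp 2 t))).add
        ((hd3 t).smul (hcomp 1 t))
    have hsucc : iteratedDeriv 4 (y ∘ σ) = deriv (iteratedDeriv 3 (y ∘ σ)) := iteratedDeriv_succ
    rw [hsucc, e3]
    refine (h.deriv).trans ?_
    simp only [Pi.pow_apply, Pi.mul_apply]
    module
  -- derivative of A
  have hAfun : A = fun u => (a u - 6 * iteratedDeriv 2 σ u / deriv σ u) * (1 / deriv σ u) :=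
    funext hA
  have hDA : ∀ t, HasDerivAt A ((deriv a t * deriv σ t ^ 2
      - a t * deriv σ t * iteratedDeriv 2 σ t - 6 * deriv σ t * iteratedDeriv 3 σ t
      + 12 * iteratedDeriv 2 σ t ^ 2) / deriv σ t ^ 3) t := by
    intro t
    have hs : deriv σ t ≠ 0 := (hσ' t).ne'
    have h := ((hda t).sub (((hd2 t).const_mul (6:ℝ)).div (hd1 t) hs)).mul
      ((hasDerivAt_const t (1:ℝ)).div (hd1 t) hs)
    rw [hAfun]
    refine h.congr_deriv ?_
    simp only [Pi.sub_apply, Pi.div_apply, Pi.mul_apply, Pi.add_apply, Pi.pow_apply]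
    field_simp
    ring
  refine ⟨?_, ?_, ?_⟩
  · -- part (i)
    intro t
    have hs : deriv σ t ≠ 0 := (hσ' t).ne'
    have key := hode t
    rw [e4 t] at key
    simp only [e3, e2, e1] at key
    have h4 : (deriv σ t) ^ 4 • iteratedDeriv 4 y (σ t)
        = (a t * deriv σ t ^ 3 - 6 * deriv σ t ^ 2 * iteratedDeriv 2 σ t)
            • iteratedDeriv 3 y (σ t)
          + (b t * deriv σ t ^ 2 + 3 * a t * deriv σ t * iteratedDeriv 2 σ t
              - 4 * deriv σ t * iteratedDeriv 3 σ t - 3 * iteratedDeriv 2 σ t ^ 2)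
            • iteratedDeriv 2 y (σ t)
          + (c t * deriv σ t + b t * iteratedDeriv 2 σ t + a t * iteratedDeriv 3 σ t
              - iteratedDeriv 4 σ t) • iteratedDeriv 1 y (σ t) := by
      linear_combination (norm := module) key
    calc iteratedDeriv 4 y (σ t)
        = ((deriv σ t) ^ 4)⁻¹ • ((deriv σ t) ^ 4 • iteratedDeriv 4 y (σ t)) :=
          (inv_smul_smul₀ (pow_ne_zero 4 hs) _).symm
      _ = ((deriv σ t) ^ 4)⁻¹ •
          ((a t * deriv σ t ^ 3 - 6 * deriv σ t ^ 2 * iteratedDeriv 2 σ t)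
            • iteratedDeriv 3 y (σ t)
          + (b t * deriv σ t ^ 2 + 3 * a t * deriv σ t * iteratedDeriv 2 σ t
              - 4 * deriv σ t * iteratedDeriv 3 σ t - 3 * iteratedDeriv 2 σ t ^ 2)
            • iteratedDeriv 2 y (σ t)
          + (c t * deriv σ t + b t * iteratedDeriv 2 σ t + a t * iteratedDeriv 3 σ t
              - iteratedDeriv 4 σ t) • iteratedDeriv 1 y (σ t)) := by rw [h4]
      _ = A t • iteratedDeriv 3 y (σ t) + B t • iteratedDeriv 2 y (σ t)
            + C t • deriv y (σ t) := by
          rw [hA t, hB t, hC t, show deriv y = iteratedDeriv 1 y from (iteratedDeriv_one).symm]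
          match_scalars <;> field_simp
          all_goals try ring
          all_goals exact Or.inl trivial
  · -- part (ii)
    intro t
    have hs : deriv σ t ≠ 0 := (hσ' t).ne'
    rw [hB t, (hDA t).deriv, hA t]
    field_simp
    ring
  · -- part (iii)
    intro t
    have hs : deriv σ t ≠ 0 := (hσ' t).ne'
    have hF : (fun u => deriv A u / deriv σ u) = fun u =>
        ((deriv a u * deriv σ u ^ 2 - a u * deriv σ u * iteratedDeriv 2 σ u
          - 6 * deriv σ u * iteratedDeriv 3 σ u + 12 * iteratedDeriv 2 σ u ^ 2)
          / deriv σ u ^ 3) / deriv σ u :=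
      funext fun u => by rw [(hDA u).deriv]
    have hG := ((((hda1 t).mul ((hd1 t).pow 2)).sub
        (((hda t).mul (hd1 t)).mul (hd2 t))).sub
        (((hd1 t).const_mul (6:ℝ)).mul (hd3 t))).add
        (((hd2 t).pow 2).const_mul (12:ℝ))
    have hDF : HasDerivAt (fun u => deriv A u / deriv σ u)
        ((iteratedDeriv 2 a t * deriv σ t ^ 3
          - 3 * deriv a t * deriv σ t ^ 2 * iteratedDeriv 2 σ t
          + 3 * a t * deriv σ t * iteratedDeriv 2 σ t ^ 2
          - a t * deriv σ t ^ 2 * iteratedDeriv 3 σ t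
          + 42 * deriv σ t * iteratedDeriv 2 σ t * iteratedDeriv 3 σ t
          - 6 * deriv σ t ^ 2 * iteratedDeriv 4 σ t
          - 48 * iteratedDeriv 2 σ t ^ 3) / deriv σ t ^ 5) t := by
      rw [hF]
      have hd := (hG.div ((hd1 t).pow 3) (pow_ne_zero 3 hs)).div (hd1 t) hs
      refine hd.congr_deriv ?_
      simp only [Pi.sub_apply, Pi.div_apply, Pi.mul_apply, Pi.add_apply, Pi.pow_apply]
      field_simp
      ring
    rw [hC t, hDF.deriv, (hDA t).deriv, hA t]
    field_simp
    ring
end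

section
/- Let ε ∈ {−1, 1} and let k, M : ℝ → ℝ be smooth. Define p₁ := (3/4)k, p₂ := (1/6)(2k' + (11/4)k² + ε), p₃ := (1/4)(M + (1/2)ε·k + (1/2)k'' + (7/4)k·k' + (3/4)k³), p₄ := 0, and then P₂ := p₂ − p₁² − p₁', P₃ := p₃ − 3p₁p₂ + 2p₁³ − p₁'', P₄ := p₄ − 4p₁p₃ + 6p₁²p₂ − 6p₁'p₂ − 3p₁⁴ + 6p₁²p₁' + 3(p₁')² − p₁''', θ₃ := P₃ − (3/2)P₂', θ₄ := P₄ − (9/5)P₂'' − (81/25)P₂² − 2θ₃'. Then θ₃ = (1/4)(M − ε·k) and θ₄ = −(3/4)k·M − (1/2)M' + (1/5)ε·k' + (3/10)ε·k² − 9/100 identically on ℝ. -/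
open scoped ContDiff


/-- The projective invariants `θ₃` and `θ₄` of a space curve parametrized by
general-affine arc length are `θ₃ = (1/4)(M − εk)` and
`θ₄ = −(3/4)kM − (1/2)M' + (1/5)εk' + (3/10)εk² − 9/100`. -/
theorem stmt_15 (ε : ℝ) (hε : ε = 1 ∨ ε = -1)
    (k M : ℝ → ℝ) (hk : ContDiff ℝ (⊤ : ℕ∞) k) (hM : ContDiff ℝ (⊤ : ℕ∞) M)
    (p₁ p₂ p₃ p₄ P₂ P₃ P₄ θ₃ θ₄ : ℝ → ℝ)
    (hp₁ : ∀ t, p₁ t = (3/4) * k t)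
    (hp₂ : ∀ t, p₂ t = (1/6) * (2 * deriv k t + (11/4) * (k t)^2 + ε))
    (hp₃ : ∀ t, p₃ t = (1/4) * (M t + (1/2) * ε * k t + (1/2) * iteratedDeriv 2 k t
      + (7/4) * k t * deriv k t + (3/4) * (k t)^3))
    (hp₄ : ∀ t, p₄ t = 0)
    (hP₂ : ∀ t, P₂ t = p₂ t - (p₁ t)^2 - deriv p₁ t)
    (hP₃ : ∀ t, P₃ t = p₃ t - 3 * p₁ t * p₂ t + 2 * (p₁ t)^3 - iteratedDeriv 2 p₁ t)
    (hP₄ : ∀ t, P₄ t = p₄ t - 4 * p₁ t * p₃ t + 6 * (p₁ t)^2 * p₂ t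
      - 6 * deriv p₁ t * p₂ t - 3 * (p₁ t)^4 + 6 * (p₁ t)^2 * deriv p₁ t
      + 3 * (deriv p₁ t)^2 - iteratedDeriv 3 p₁ t)
    (hθ₃ : ∀ t, θ₃ t = P₃ t - (3/2) * deriv P₂ t)
    (hθ₄ : ∀ t, θ₄ t = P₄ t - (9/5) * iteratedDeriv 2 P₂ t - (81/25) * (P₂ t)^2
      - 2 * deriv θ₃ t) :
    (∀ t, θ₃ t = (1/4) * (M t - ε * k t)) ∧
    (∀ t, θ₄ t = -(3/4) * k t * M t - (1/2) * deriv M t + (1/5) * ε * deriv k t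
      + (3/10) * ε * (k t)^2 - 9/100) := by

  -- differentiability facts
  have hk0 : ContDiff ℝ ∞ k := hk.of_le (by simp)
  have hk1 : Differentiable ℝ k := hk0.differentiable (by norm_num)
  have hkd : ContDiff ℝ ∞ (deriv k) := (contDiff_infty_iff_deriv.mp hk0).2
  have hk2 : Differentiable ℝ (deriv k) := hkd.differentiable (by norm_num)
  have hkdd : ContDiff ℝ ∞ (deriv (deriv k)) := (contDiff_infty_iff_deriv.mp hkd).2
  have hk3 : Differentiable ℝ (deriv (deriv k)) := hkdd.differentiable (by norm_num)
  have hM1 : Differentiable ℝ M := (hM.of_le (by simp) : ContDiff ℝ ∞ M).differentiable (by norm_num)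
  have i2k : ∀ t, iteratedDeriv 2 k t = deriv (deriv k) t := by
    intro t
    simp [iteratedDeriv_succ, iteratedDeriv_one]
  -- derivatives of p₁
  have ep₁ : p₁ = fun t => (3/4 : ℝ) * k t := funext hp₁
  have hdp₁ : ∀ t, deriv p₁ t = (3/4) * deriv k t := by
    intro t; rw [ep₁]; exact deriv_const_mul_field _
  have hd2p₁ : ∀ t, iteratedDeriv 2 p₁ t = (3/4) * deriv (deriv k) t := by
    intro t
    rw [iteratedDeriv_succ, iteratedDeriv_one, funext hdp₁]
    exact deriv_const_mul_field _
  have hd3p₁ : ∀ t, iteratedDeriv 3 p₁ t = (3/4) * deriv (deriv (deriv k)) t := by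
    intro t
    rw [iteratedDeriv_succ, funext hd2p₁]
    exact deriv_const_mul_field _
  -- closed form of P₂ and its derivatives
  have eP₂ : ∀ t, P₂ t = -(5/12) * deriv k t - (5/48) * (k t)^2 + ε/6 := by
    intro t; rw [hP₂, hp₂, hp₁, hdp₁]; ring
  have hdP₂ : ∀ t, HasDerivAt P₂
      (-(5/12) * deriv (deriv k) t - (5/48) * (2 * k t ^ 1 * deriv k t)) t := by
    intro t
    rw [funext eP₂]
    exact (((hk2 t).hasDerivAt.const_mul (-(5/12))).sub
      (((hk1 t).hasDerivAt.pow 2).const_mul (5/48))).add_const (ε/6)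
  have edP₂ : ∀ t, deriv P₂ t
      = -(5/12) * deriv (deriv k) t - (5/48) * (2 * k t ^ 1 * deriv k t) := by
    intro t; exact (hdP₂ t).deriv
  have hd2P₂ : ∀ t, iteratedDeriv 2 P₂ t
      = -(5/12) * deriv (deriv (deriv k)) t
        - (5/48) * (2 * (deriv k t * deriv k t + k t * deriv (deriv k) t)) := by
    intro t
    rw [iteratedDeriv_succ, iteratedDeriv_one, funext edP₂]
    have h : HasDerivAt (fun t => -(5/12) * deriv (deriv k) t
        - (5/48) * (2 * k t ^ 1 * deriv k t))
        (-(5/12) * deriv (deriv (deriv k)) t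
          - (5/48) * (2 * (deriv k t * deriv k t + k t * deriv (deriv k) t))) t := by
      have h1 := ((hk3 t).hasDerivAt.const_mul (-(5/12) : ℝ))
      have h2 := (((hk1 t).hasDerivAt.mul (hk2 t).hasDerivAt).const_mul (2 : ℝ)).const_mul
        ((5/48 : ℝ))
      have := h1.sub h2
      convert this using 2 with x
      case e'_4 => rfl
      case e'_5 => rfl
      case e'_8 => simp only [Pi.sub_apply, Pi.mul_apply]; ring
    exact h.deriv
  -- closed form of P₃ and θ₃
  have eP₃ : ∀ t, P₃ t = (1/4) * M t - (1/4) * ε * k t - (5/8) * deriv (deriv k) t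
      - (5/16) * (k t * deriv k t) := by
    intro t; rw [hP₃, hp₃, hp₂, hp₁, hd2p₁, i2k]; ring
  have eθ₃ : ∀ t, θ₃ t = (1/4) * M t - (1/4) * (ε * k t) := by
    intro t; rw [hθ₃, eP₃, edP₂]; ring
  have hdθ₃ : ∀ t, deriv θ₃ t = (1/4) * deriv M t - (1/4) * (ε * deriv k t) := by
    intro t
    rw [funext eθ₃]
    exact (((hM1 t).hasDerivAt.const_mul (1/4 : ℝ)).sub
      (((hk1 t).hasDerivAt.const_mul ε).const_mul (1/4 : ℝ))).deriv
  refine ⟨fun t => by rw [eθ₃]; ring, fun t => ?_⟩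
  have eP₄ : ∀ t, P₄ t = -(3/4) * k t * M t + (3/16) * ε * (k t)^2
      - (3/8) * k t * deriv (deriv k) t + (9/32) * (k t)^2 * deriv k t
      + (9/256) * (k t)^4 - (3/4) * ε * deriv k t + (3/16) * (deriv k t)^2
      - (3/4) * deriv (deriv (deriv k)) t := by
    intro t; rw [hP₄, hp₄, hp₃, hp₂, hp₁, hdp₁, hd3p₁, i2k]; ring
  rw [hθ₄, eP₄, hd2P₂, eP₂, hdθ₃]
  rcases hε with h | h <;> subst h <;> ring
end

section
/- Let ε ∈ {−1, 1}, let k : ℝ → ℝ be smooth, and set M := ε·k. Then the pair of space extremal equations (E1): k''' + (3/2)k·k'' + (1/2)(k')² + (1/2)k²·k' − (1/5)ε·k' + (6/5)M' = 0 and (E2): k'' + (2/3)k·k' + (5/6)ε·k'·M − (3/2)ε·k·M' − ε·M'' = 0 holds identically on ℝ if and only if k satisfies the plane extremal equation k''' + (3/2)k·k'' + (1/2)(k')² + (1/2)k²·k' + ε·k' = 0. In particular, with M = ε·k the equation (E2) is satisfied identically for every smooth k. -/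
/-- The first space extremal equation (E1) at a point `t`. -/
def SpaceExtremalEq1 (ε : ℝ) (k M : ℝ → ℝ) (t : ℝ) : Prop :=
  iteratedDeriv 3 k t + (3/2) * k t * iteratedDeriv 2 k t
    + (1/2) * (deriv k t)^2 + (1/2) * (k t)^2 * deriv k t
    - (1/5) * ε * deriv k t + (6/5) * deriv M t = 0

/-- The second space extremal equation (E2) at a point `t`. -/
def SpaceExtremalEq2 (ε : ℝ) (k M : ℝ → ℝ) (t : ℝ) : Prop :=
  iteratedDeriv 2 k t + (2/3) * k t * deriv k t + (5/6) * ε * deriv k t * M t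
    - (3/2) * ε * k t * deriv M t - ε * iteratedDeriv 2 M t = 0

/-- For `M = ε·k` (a curve belonging to a linear complex), the pair of space
extremal equations is equivalent to the plane extremal equation; moreover
(E2) holds identically. -/
theorem stmt_16 (ε : ℝ) (hε : ε = 1 ∨ ε = -1)
    (k : ℝ → ℝ) (hk : ContDiff ℝ (⊤ : ℕ∞) k)
    (M : ℝ → ℝ) (hM : M = fun t => ε * k t) :
    (((∀ t, SpaceExtremalEq1 ε k M t) ∧ (∀ t, SpaceExtremalEq2 ε k M t)) ↔
      (∀ t, PlaneExtremalEq ε k t)) ∧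
    (∀ t, SpaceExtremalEq2 ε k M t) := by

  have hε2 : ε^2 = 1 := by rcases hε with h|h <;> simp [h]
  have hdM : ∀ t, deriv M t = ε * deriv k t := by
    intro t
    rw [hM, deriv_const_mul _ (hk.differentiable (by norm_num)).differentiableAt]
  have hdk : Differentiable ℝ (deriv k) := ((contDiff_infty_iff_deriv.mp (hk.of_le (by simp))).2).differentiable (by norm_num)
  have hd1 : deriv (fun t => ε * k t) = fun t => ε * deriv k t :=
    funext fun t => deriv_const_mul ε (hk.differentiable (by norm_num)).differentiableAt
  have h2M : ∀ t, iteratedDeriv 2 M t = ε * iteratedDeriv 2 k t := by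
    intro t
    rw [hM, iteratedDeriv_succ, iteratedDeriv_one, hd1,
      deriv_const_mul ε hdk.differentiableAt,
      iteratedDeriv_succ, iteratedDeriv_one]
  have hE2 : ∀ t, SpaceExtremalEq2 ε k M t := by
    intro t
    simp only [SpaceExtremalEq2, hdM, h2M]
    have hMt : M t = ε * k t := by rw [hM]
    rw [hMt]
    rcases hε with h|h <;> subst h <;> ring
  refine ⟨⟨fun h t => ?_, fun h => ⟨fun t => ?_, hE2⟩⟩, hE2⟩
  · have h1 := h.1 t
    simp only [SpaceExtremalEq1, hdM] at h1
    simp only [PlaneExtremalEq]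
    linarith
  · have h1 := h t
    simp only [PlaneExtremalEq] at h1
    simp only [SpaceExtremalEq1, hdM]
    linarith
end

section
/- Let ε ∈ {−1, 1}, let k : ℝ → ℝ be continuous, and let x, E₁, E₂ : ℝ → ℝ² be continuously differentiable maps satisfying the plane general-affine Frenet system x' = E₁, E₁' = −(1/2)k·E₁ + E₂, E₂' = −ε·E₁ − k·E₂, with E₁(t), E₂(t) linearly independent for all t. Suppose there exist a differentiable function r : ℝ → ℝ and a constant vector v ∈ ℝ² such that x(t) + r(t)·E₂(t) = v for all t. Then r(t) = ε for all t and k(t) = 0 for all t. -/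
/-! Differentiating `x + r • E₂ = v` with the Frenet equations gives
`(1 - ε r) • E₁ + (r' - r k) • E₂ = 0`. By linear independence of the frame both coefficients
vanish: `ε r = 1`, so `r = ε` since `ε² = 1`; then `r' = 0` and `ε k = 0`. -/

theorem frame_combination_eq_zero_of_normal_through_point
    {F : Type*} [NormedAddCommGroup F] [NormedSpace ℝ F]
    {x E₁ E₂ : ℝ → F} {r : ℝ → ℝ} {v : F} {ε k r' t : ℝ}
    (hE₂ : HasDerivAt E₂ ((-ε) • E₁ t - k • E₂ t) t) (hr : HasDerivAt r r' t)
    (hxE : deriv x t = E₁ t) (hcirc : ∀ s, x s + r s • E₂ s = v) :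
    (1 - ε * r t) • E₁ t + (r' - r t * k) • E₂ t = 0 := by
  have hx : x = fun s => v - r s • E₂ s := funext fun s => eq_sub_of_add_eq (hcirc s)
  have hdx : HasDerivAt x (0 - (r t • ((-ε) • E₁ t - k • E₂ t) + r' • E₂ t)) t :=
    hx ▸ (hasDerivAt_const t v).sub (hr.smul hE₂)
  rw [hdx.deriv] at hxE
  linear_combination (norm := module) (-1 : ℝ) • hxE

theorem stmt_19_general (ε : ℝ) (hε : ε = 1 ∨ ε = -1)
    (k : ℝ → ℝ)
    (x E₁ E₂ : ℝ → Fin 2 → ℝ)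
    (h2 : ContDiff ℝ 1 E₂)
    (hxE : ∀ t, deriv x t = E₁ t)
    (hE₂ : ∀ t, deriv E₂ t = (-ε) • E₁ t - k t • E₂ t)
    (hind : ∀ t, LinearIndependent ℝ ![E₁ t, E₂ t])
    (r : ℝ → ℝ) (hr : Differentiable ℝ r) (v : Fin 2 → ℝ)
    (hcirc : ∀ t, x t + r t • E₂ t = v) :
    (∀ t, r t = ε) ∧ (∀ t, k t = 0) := by
  have hcoef (t : ℝ) : 1 - ε * r t = 0 ∧ deriv r t - r t * k t = 0 := by
    have hdE₂ := (h2.differentiable one_ne_zero t).hasDerivAt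
    rw [hE₂ t] at hdE₂
    exact LinearIndependent.pair_iff.1 (hind t) _ _ <|
      frame_combination_eq_zero_of_normal_through_point hdE₂ (hr t).hasDerivAt (hxE t) hcirc
  have hrε (t : ℝ) : r t = ε := by
    have := (hcoef t).1
    rcases hε with rfl | rfl <;> linarith
  refine ⟨hrε, fun t => ?_⟩
  have hr' : deriv r t = 0 := by rw [funext hrε]; exact deriv_const t ε
  have := (hcoef t).2
  rw [hr', hrε t] at this
  rcases hε with rfl | rfl <;> linarith

/-- A general-affine circle (a curve whose general-affine normal line passes
through a fixed point, i.e. `x + r·E₂ = v`) has `r ≡ ε` and vanishing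
general-affine curvature. -/
theorem stmt_19 (ε : ℝ) (hε : ε = 1 ∨ ε = -1)
    (k : ℝ → ℝ) (hk : Continuous k)
    (x E₁ E₂ : ℝ → Fin 2 → ℝ)
    (hx : ContDiff ℝ 1 x) (h1 : ContDiff ℝ 1 E₁) (h2 : ContDiff ℝ 1 E₂)
    (hxE : ∀ t, deriv x t = E₁ t)
    (hE₁ : ∀ t, deriv E₁ t = (-(1/2) * k t) • E₁ t + E₂ t)
    (hE₂ : ∀ t, deriv E₂ t = (-ε) • E₁ t - k t • E₂ t)
    (hind : ∀ t, LinearIndependent ℝ ![E₁ t, E₂ t])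
    (r : ℝ → ℝ) (hr : Differentiable ℝ r) (v : Fin 2 → ℝ)
    (hcirc : ∀ t, x t + r t • E₂ t = v) :
    (∀ t, r t = ε) ∧ (∀ t, k t = 0) :=
  stmt_19_general ε hε k x E₁ E₂ h2 hxE hE₂ hind r hr v hcirc
end
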